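/- arXiv:2309.00229 — 5 statements merged into one kernel-verified Lean document; each statement's English description precedes it below -/
import Mathlib

section
/- The collection of circuits of the parallel connection P(M1, M2) — namely the circuits of M1, the circuits of M2, and the sets I1 ⊔ I2 where I_i ∪ {p_i} is a circuit of M_i — satisfies the circuit axioms of a matroid. -/
/-!
Because `E₁ ∩ E₂ = {p}`, a set lying in both ground sets is contained in `{p}`, and
looplessness rules out `{p}` as a circuit. Hence a circuit of one kind can only lie inside a
circuit of the same kind, where minimality in `M₁` and in `M₂` applies side by side. For
elimination one eliminates inside a single `Mᵢ`: the resulting `Mᵢ`-circuit either avoids `p`,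
or passes through `p` and is glued along `p` to a circuit of the other matroid through `p`,
giving a circuit of the third kind.
-/

/-- A circuit of a matroid: a minimal dependent subset of the ground set. -/
def IsCircuit {α : Type*} (M : Matroid α) (C : Set α) : Prop :=
  C ⊆ M.E ∧ ¬ M.Indep C ∧ ∀ x ∈ C, M.Indep (C \ {x})

/-- A matroid is loopless if every singleton of the ground set is independent. -/
def MLoopless {α : Type*} (M : Matroid α) : Prop := ∀ a ∈ M.E, M.Indep {a}

/-- The circuits of the parallel connection of `M₁` and `M₂` at the (identified) basepoint
`p`: circuits of `M₁`, circuits of `M₂`, and sets `I₁ ⊔ I₂` with `I_i ∪ {p}` a circuit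
of `M_i`. -/
def ParallelCircuit {α : Type*} (M₁ M₂ : Matroid α) (p : α) (C : Set α) : Prop :=
  IsCircuit M₁ C ∨ IsCircuit M₂ C ∨
    ∃ I₁ I₂ : Set α, p ∉ I₁ ∧ p ∉ I₂ ∧ IsCircuit M₁ (insert p I₁) ∧
      IsCircuit M₂ (insert p I₂) ∧ C = I₁ ∪ I₂

open Set

section

variable {α : Type*} {M M₁ M₂ : Matroid α} {A B C C' C₁ C₂ I J I₁ I₂ J₁ J₂ : Set α}
  {p x : α}

lemma Set.eq_of_insert_eq_insert_of_notMem {s t : Set α} {a : α} (hs : a ∉ s) (ht : a ∉ t)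
    (h : insert a s = insert a t) : s = t := by
  rw [← insert_sdiff_self_of_notMem hs, h, insert_sdiff_self_of_notMem ht]

lemma isCircuit_iff_isCircuit : IsCircuit M C ↔ M.IsCircuit C := by
  rw [Matroid.isCircuit_iff_dep_forall_sdiff_singleton_indep, Matroid.Dep, IsCircuit]
  tauto

lemma mLoopless_iff_loopless : MLoopless M ↔ M.Loopless := by
  simp only [MLoopless, Matroid.loopless_iff_forall_isNonloop, Matroid.indep_singleton]

namespace Matroid

lemma IsCircuit.not_subset_singleton [M.Loopless] (hC : M.IsCircuit C) (e : α) : ¬ C ⊆ {e} :=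
  (loopless_iff_forall_isCircuit.1 ‹_› C hC).not_subset_singleton

def IsPuncturedCircuit (M : Matroid α) (p : α) (I : Set α) : Prop :=
  M.IsCircuit (insert p I) ∧ p ∉ I

lemma IsCircuit.isPuncturedCircuit_diff (hC : M.IsCircuit C) (hp : p ∈ C) :
    M.IsPuncturedCircuit p (C \ {p}) :=
  ⟨by rwa [insert_sdiff_singleton, insert_eq_of_mem hp], fun h ↦ h.2 rfl⟩

namespace IsPuncturedCircuit

lemma subset_ground (hI : M.IsPuncturedCircuit p I) : I ⊆ M.E :=
  (subset_insert _ _).trans hI.1.subset_ground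

lemma not_subset_singleton [M.Loopless] (hI : M.IsPuncturedCircuit p I) : ¬ I ⊆ {p} :=
  fun h ↦ hI.1.not_subset_singleton p (insert_subset rfl h)

lemma nonempty [M.Loopless] (hI : M.IsPuncturedCircuit p I) : I.Nonempty :=
  nonempty_iff_ne_empty.2 fun h ↦ hI.not_subset_singleton (h ▸ empty_subset _)

lemma eq_of_subset (hI : M.IsPuncturedCircuit p I) (hJ : M.IsPuncturedCircuit p J) (h : I ⊆ J) :
    I = J :=
  eq_of_insert_eq_insert_of_notMem hI.2 hJ.2
    (hI.1.eq_of_subset_isCircuit hJ.1 (insert_subset_insert h))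

lemma disjoint_ground (hE : M₁.E ∩ M₂.E ⊆ {p}) (hI : M₂.IsPuncturedCircuit p I) :
    Disjoint M₁.E I :=
  disjoint_right.2 fun z hz hz₁ ↦ hI.2 ((hE ⟨hz₁, hI.subset_ground hz⟩ : z = p) ▸ hz)

lemma not_subset_ground [M₂.Loopless] (hE : M₁.E ∩ M₂.E ⊆ {p})
    (hI : M₂.IsPuncturedCircuit p I) : ¬ I ⊆ M₁.E :=
  fun h ↦ hI.not_subset_singleton fun _ hz ↦ hE ⟨h hz, hI.subset_ground hz⟩

end IsPuncturedCircuit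

end Matroid

lemma parallelCircuit_iff : ParallelCircuit M₁ M₂ p C ↔ M₁.IsCircuit C ∨ M₂.IsCircuit C ∨
      ∃ I₁ I₂, M₁.IsPuncturedCircuit p I₁ ∧ M₂.IsPuncturedCircuit p I₂ ∧ C = I₁ ∪ I₂ := by
  simp only [ParallelCircuit, isCircuit_iff_isCircuit, Matroid.IsPuncturedCircuit]
  grind

lemma ParallelCircuit.symm (h : ParallelCircuit M₁ M₂ p C) : ParallelCircuit M₂ M₁ p C := by
  obtain h | h | ⟨I₁, I₂, hI₁, hI₂, rfl⟩ := parallelCircuit_iff.1 h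
  exacts [parallelCircuit_iff.2 (.inr (.inl h)), parallelCircuit_iff.2 (.inl h),
    parallelCircuit_iff.2 (.inr (.inr ⟨I₂, I₁, hI₂, hI₁, union_comm _ _⟩))]

lemma ParallelCircuit.nonempty [M₁.Loopless] (h : ParallelCircuit M₁ M₂ p C) : C.Nonempty := by
  obtain h | h | ⟨I₁, I₂, hI₁, -, rfl⟩ := parallelCircuit_iff.1 h
  exacts [h.nonempty, h.nonempty, hI₁.nonempty.mono subset_union_left]

lemma Matroid.IsCircuit.eq_of_subset_parallelCircuit [M₁.Loopless] (hE : M₁.E ∩ M₂.E ⊆ {p})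
    (hC : M₁.IsCircuit C) (hC' : ParallelCircuit M₁ M₂ p C') (h : C ⊆ C') : C = C' := by
  obtain hC' | hC' | ⟨I₁, I₂, hI₁, hI₂, rfl⟩ := parallelCircuit_iff.1 hC'
  · exact hC.eq_of_subset_isCircuit hC' h
  · exact absurd (fun _ hz ↦ hE ⟨hC.subset_ground hz, hC'.subset_ground (h hz)⟩)
      (hC.not_subset_singleton p)
  · have hCI₁ : C ⊆ I₁ :=
      ((hI₂.disjoint_ground hE).mono_left hC.subset_ground).subset_left_of_subset_union h
    have hpC : p ∈ C :=
      hC.eq_of_subset_isCircuit hI₁.1 (hCI₁.trans (subset_insert _ _)) ▸ mem_insert p I₁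
    exact absurd (hCI₁ hpC) hI₁.2

lemma ParallelCircuit.eq_of_subset [M₁.Loopless] [M₂.Loopless] (hE : M₁.E ∩ M₂.E ⊆ {p})
    (hC : ParallelCircuit M₁ M₂ p C) (hC' : ParallelCircuit M₁ M₂ p C') (h : C ⊆ C') :
    C = C' := by
  have hE' : M₂.E ∩ M₁.E ⊆ {p} := inter_comm M₁.E _ ▸ hE
  obtain hC | hC | ⟨I₁, I₂, hI₁, hI₂, rfl⟩ := parallelCircuit_iff.1 hC
  · exact hC.eq_of_subset_parallelCircuit hE hC' h
  · exact hC.eq_of_subset_parallelCircuit hE' hC'.symm h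
  obtain hC' | hC' | ⟨J₁, J₂, hJ₁, hJ₂, rfl⟩ := parallelCircuit_iff.1 hC'
  · exact hI₂.not_subset_ground hE (subset_union_right.trans (h.trans hC'.subset_ground)) |>.elim
  · exact hI₁.not_subset_ground hE' (subset_union_left.trans (h.trans hC'.subset_ground)) |>.elim
  · have h₁ : I₁ ⊆ J₁ := Disjoint.subset_left_of_subset_union (subset_union_left.trans h)
      ((hJ₂.disjoint_ground hE).mono_left hI₁.subset_ground)
    have h₂ : I₂ ⊆ J₂ := Disjoint.subset_right_of_subset_union (subset_union_right.trans h)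
      ((hJ₁.disjoint_ground hE').mono_left hI₂.subset_ground)
    rw [hI₁.eq_of_subset hJ₁ h₁, hI₂.eq_of_subset hJ₂ h₂]

lemma Matroid.IsCircuit.exists_parallelCircuit_subset (hC : M₁.IsCircuit C)
    (hI : M₂.IsPuncturedCircuit p I) :
    ∃ C', ParallelCircuit M₁ M₂ p C' ∧ C' ⊆ C \ {p} ∪ I := by
  by_cases hp : p ∈ C
  · exact ⟨C \ {p} ∪ I, parallelCircuit_iff.2 (.inr (.inr
      ⟨_, _, hC.isPuncturedCircuit_diff hp, hI, rfl⟩)), Subset.rfl⟩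
  · exact ⟨C, parallelCircuit_iff.2 (.inl hC),
      subset_union_of_subset_left (subset_sdiff_singleton Subset.rfl hp) _⟩

lemma Matroid.IsCircuit.exists_parallelCircuit_subset_of_ne (hA : M₁.IsCircuit A)
    (hB : M₁.IsCircuit B) (hAB : A ≠ B) (hI : M₂.IsPuncturedCircuit p I) (hxI : x ∉ I) :
    ∃ C, ParallelCircuit M₁ M₂ p C ∧ C ⊆ ((A ∪ B) \ {p} ∪ I) \ {x} := by
  obtain ⟨C, hCAB, hC⟩ := hA.elimination hB hAB x
  obtain ⟨C', hC', hC'C⟩ := hC.exists_parallelCircuit_subset hI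
  exact ⟨C', hC', hC'C.trans (by grind)⟩

lemma Matroid.IsCircuit.parallelCircuit_elimination (hE : M₁.E ∩ M₂.E ⊆ {p})
    (hC₁ : M₁.IsCircuit C₁) (hC₂ : ParallelCircuit M₁ M₂ p C₂) (hne : C₁ ≠ C₂)
    (hx : x ∈ C₁ ∩ C₂) : ∃ C₃, ParallelCircuit M₁ M₂ p C₃ ∧ C₃ ⊆ (C₁ ∪ C₂) \ {x} := by
  obtain h₂ | h₂ | ⟨I₁, I₂, hI₁, hI₂, rfl⟩ := parallelCircuit_iff.1 hC₂
  · obtain ⟨C₃, hsub, hC₃⟩ := hC₁.elimination h₂ hne x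
    exact ⟨C₃, parallelCircuit_iff.2 (.inl hC₃), hsub⟩
  · obtain rfl : x = p := hE ⟨hC₁.subset_ground hx.1, h₂.subset_ground hx.2⟩
    exact ⟨C₁ \ {x} ∪ C₂ \ {x}, parallelCircuit_iff.2 (.inr (.inr ⟨_, _,
      hC₁.isPuncturedCircuit_diff hx.1, h₂.isPuncturedCircuit_diff hx.2, rfl⟩)),
      union_sdiff_distrib.symm.subset⟩
  have hxI₂ : x ∉ I₂ := disjoint_left.1 (hI₂.disjoint_ground hE) (hC₁.subset_ground hx.1)
  have hxI₁ : x ∈ I₁ := hx.2.resolve_right hxI₂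
  by_cases hC₁I₁ : C₁ = insert p I₁
  · have hxp : x ≠ p := ne_of_mem_of_not_mem hxI₁ hI₁.2
    exact ⟨insert p I₂, parallelCircuit_iff.2 (.inr (.inl hI₂.1)), by grind⟩
  · obtain ⟨C, hC, hsub⟩ :=
      hC₁.exists_parallelCircuit_subset_of_ne hI₁.1 hC₁I₁ hI₂ hxI₂
    exact ⟨C, hC, hsub.trans (by grind)⟩

lemma Matroid.IsPuncturedCircuit.union_elimination (hE : M₁.E ∩ M₂.E ⊆ {p})
    (hI₁ : M₁.IsPuncturedCircuit p I₁) (hI₂ : M₂.IsPuncturedCircuit p I₂)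
    (hJ₁ : M₁.IsPuncturedCircuit p J₁) (hJ₂ : M₂.IsPuncturedCircuit p J₂)
    (hne : I₁ ∪ I₂ ≠ J₁ ∪ J₂) (hxI : x ∈ I₁) :
    ∃ C, ParallelCircuit M₁ M₂ p C ∧ C ⊆ (I₁ ∪ I₂ ∪ (J₁ ∪ J₂)) \ {x} := by
  have hxE₂ : x ∉ M₂.E :=
    disjoint_right.1 (hI₁.disjoint_ground (inter_comm M₁.E _ ▸ hE)) hxI
  by_cases h₁ : insert p I₁ = insert p J₁
  -- equal `M₁`-sides: eliminate `p` between the `M₂`-sides instead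
  · have hIJ₁ : I₁ = J₁ := eq_of_insert_eq_insert_of_notMem hI₁.2 hJ₁.2 h₁
    have h₂ : insert p I₂ ≠ insert p J₂ := fun h ↦
      hne (by rw [hIJ₁, eq_of_insert_eq_insert_of_notMem hI₂.2 hJ₂.2 h])
    obtain ⟨C, hsub, hC⟩ := hI₂.1.elimination hJ₂.1 h₂ p
    have hCE := hC.subset_ground
    exact ⟨C, parallelCircuit_iff.2 (.inr (.inl hC)), by grind⟩
  · have hxI₂ : x ∉ I₂ := fun h ↦ hxE₂ (hI₂.subset_ground h)
    obtain ⟨C, hC, hsub⟩ := hI₁.1.exists_parallelCircuit_subset_of_ne hJ₁.1 h₁ hI₂ hxI₂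
    exact ⟨C, hC, hsub.trans (by grind)⟩

lemma ParallelCircuit.elimination (hE : M₁.E ∩ M₂.E ⊆ {p}) (hC₁ : ParallelCircuit M₁ M₂ p C₁)
    (hC₂ : ParallelCircuit M₁ M₂ p C₂) (hne : C₁ ≠ C₂) (hx : x ∈ C₁ ∩ C₂) :
    ∃ C₃, ParallelCircuit M₁ M₂ p C₃ ∧ C₃ ⊆ (C₁ ∪ C₂) \ {x} := by
  have hE' : M₂.E ∩ M₁.E ⊆ {p} := inter_comm M₁.E _ ▸ hE
  obtain h₁ | h₁ | ⟨I₁, I₂, hI₁, hI₂, rfl⟩ := parallelCircuit_iff.1 hC₁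
  · exact h₁.parallelCircuit_elimination hE hC₂ hne hx
  · obtain ⟨C₃, hC₃, hsub⟩ := h₁.parallelCircuit_elimination hE' hC₂.symm hne hx
    exact ⟨C₃, hC₃.symm, hsub⟩
  obtain h₂ | h₂ | ⟨J₁, J₂, hJ₁, hJ₂, rfl⟩ := parallelCircuit_iff.1 hC₂
  · rw [union_comm]
    exact h₂.parallelCircuit_elimination hE hC₁ hne.symm ⟨hx.2, hx.1⟩
  · obtain ⟨C₃, hC₃, hsub⟩ :=
      h₂.parallelCircuit_elimination hE' hC₁.symm hne.symm ⟨hx.2, hx.1⟩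
    exact ⟨C₃, hC₃.symm, union_comm C₂ _ ▸ hsub⟩
  rcases hx.1 with hxI | hxI
  · exact hI₁.union_elimination hE hI₂ hJ₁ hJ₂ hne hxI
  · obtain ⟨C₃, hC₃, hsub⟩ := hI₂.union_elimination hE' hI₁ hJ₂ hJ₁
      (by rwa [union_comm I₂, union_comm J₂]) hxI
    exact ⟨C₃, hC₃.symm, by rwa [union_comm I₂, union_comm J₂] at hsub⟩

end

/-- the collection of circuits of the parallel connection `P(M₁, M₂)` of two
loopless matroids whose ground sets meet exactly in the identified basepoint `p` —
namely circuits of `M₁`, circuits of `M₂`, and sets `I₁ ⊔ I₂` with `I_i ∪ {p}` a circuit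
of `M_i` — satisfies the circuit axioms of a matroid: no circuit is empty, no circuit
properly contains another, and circuit elimination holds. -/
theorem parallelConnection_circuit_axioms {α : Type*} (M₁ M₂ : Matroid α) (p : α)
    (hl₁ : MLoopless M₁) (hl₂ : MLoopless M₂)
    (hmeet : M₁.E ∩ M₂.E = {p}) :
    (∀ C, ParallelCircuit M₁ M₂ p C → C.Nonempty) ∧
    (∀ C C', ParallelCircuit M₁ M₂ p C → ParallelCircuit M₁ M₂ p C' → C ⊆ C' → C = C') ∧
    (∀ C₁ C₂ x, ParallelCircuit M₁ M₂ p C₁ → ParallelCircuit M₁ M₂ p C₂ → C₁ ≠ C₂ →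
      x ∈ C₁ ∩ C₂ → ∃ C₃, ParallelCircuit M₁ M₂ p C₃ ∧ C₃ ⊆ (C₁ ∪ C₂) \ {x}) := by
  have := mLoopless_iff_loopless.1 hl₁
  have := mLoopless_iff_loopless.1 hl₂
  exact ⟨fun _ hC ↦ hC.nonempty, fun _ _ hC hC' ↦ hC.eq_of_subset hmeet.subset hC',
    fun _ _ _ hC₁ hC₂ ↦ hC₁.elimination hmeet.subset hC₂⟩
end

section
/- Let M be the parallel connection of loopless matroids M1 and M2 at basepoints p1 ∈ E1 and p2 ∈ E2. Define the linear map φ from R^E/R·1_E to (R^{E1}/R·1_{E1}) ⊕ (R^{E2}/R·1_{E2}) by φ(ē_x) = ē_x for x ≠ p and φ(ē_p) = ē_{p1} + ē_{p2}. Then φ is a vector space isomorphism, and a point x lies in the support of the Bergman fan of M if and only if φ(x) lies in the support of the product of the Bergman fans of M1 and M2. -/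
/-- The line `ℝ·1` of constant functions inside `S → ℝ`. -/
def constOneSpan {α : Type*} (S : Set α) : Submodule ℝ (↥S → ℝ) :=
  Submodule.span ℝ {fun _ => (1 : ℝ)}

/-- `ℝ^S / ℝ·1`. -/
abbrev QuotByOne {α : Type*} (S : Set α) := (↥S → ℝ) ⧸ constOneSpan S

/-- The minimum of `x` over `C` is achieved at least twice. -/
def MinAchievedTwice {α : Type*} (C : Set α) (x : α → ℝ) : Prop :=
  ∃ i ∈ C, ∃ j ∈ C, i ≠ j ∧ x i = x j ∧ ∀ k ∈ C, x i ≤ x k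

/-- A point (given by a representative `x : α → ℝ`) lies in the support of the Bergman
fan of `M` iff for every circuit `C` of `M` the minimum `min{x i : i ∈ C}` is achieved
at least twice. -/
def InBergmanSupport {α : Type*} (M : Matroid α) (x : α → ℝ) : Prop :=
  ∀ C, IsCircuit M C → MinAchievedTwice C x

/-!
Restricting to `E₁` and `E₂` kills exactly the functions that are constant on each piece,
and since the pieces meet in the single point `p` these constants agree; conversely, after
shifting one of two given functions by a constant they agree at `p` and glue. On the Bergman
side, the only circuits of `M` not already circuits of `M₁` or `M₂` are the sets `I₁ ∪ I₂`,
and their minimum condition is inherited from the circuits `I₁ ∪ {p}` and `I₂ ∪ {p}`.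
-/

section QuotByOne

variable {α : Type*} {S T : Set α}

lemma mem_constOneSpan_iff {f : ↥S → ℝ} : f ∈ constOneSpan S ↔ ∃ c : ℝ, ∀ s, f s = c := by
  simp only [constOneSpan, Submodule.mem_span_singleton, funext_iff, Pi.smul_apply,
    smul_eq_mul, mul_one, eq_comm]

lemma mk_add_const_eq (f : ↥S → ℝ) (c : ℝ) :
    (Submodule.Quotient.mk (f + fun _ => c) : QuotByOne S) = Submodule.Quotient.mk f := by
  rw [Submodule.Quotient.eq, add_sub_cancel_left, mem_constOneSpan_iff]
  exact ⟨c, fun _ => rfl⟩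

def restrictPairQ (S T : Set α) : (↥(S ∪ T) → ℝ) →ₗ[ℝ] QuotByOne S × QuotByOne T :=
  ((constOneSpan S).mkQ ∘ₗ LinearMap.funLeft ℝ ℝ (Set.inclusion Set.subset_union_left)).prod
    ((constOneSpan T).mkQ ∘ₗ LinearMap.funLeft ℝ ℝ (Set.inclusion Set.subset_union_right))

lemma restrictPairQ_apply (f : ↥(S ∪ T) → ℝ) :
    restrictPairQ S T f = (Submodule.Quotient.mk (f ∘ Set.inclusion Set.subset_union_left),
      Submodule.Quotient.mk (f ∘ Set.inclusion Set.subset_union_right)) :=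
  rfl

lemma ker_restrictPairQ {p : α} (hp : p ∈ S ∩ T) :
    LinearMap.ker (restrictPairQ S T) = constOneSpan (S ∪ T) := by
  ext f
  rw [LinearMap.mem_ker, restrictPairQ_apply, Prod.mk_eq_zero, Submodule.Quotient.mk_eq_zero,
    Submodule.Quotient.mk_eq_zero, mem_constOneSpan_iff, mem_constOneSpan_iff,
    mem_constOneSpan_iff]
  constructor
  · rintro ⟨⟨c, hc⟩, ⟨d, hd⟩⟩
    have hcd : c = d := (hc ⟨p, hp.1⟩).symm.trans (hd ⟨p, hp.2⟩)
    exact ⟨c, fun ⟨a, ha⟩ => ha.elim (fun ha => hc ⟨a, ha⟩) fun ha => hcd ▸ hd ⟨a, ha⟩⟩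
  · rintro ⟨c, hc⟩
    exact ⟨⟨c, fun _ => hc _⟩, ⟨c, fun _ => hc _⟩⟩

lemma exists_comp_inclusion_eq (f : ↥S → ℝ) (g : ↥T → ℝ)
    (hfg : ∀ a (ha : a ∈ S ∩ T), f ⟨a, ha.1⟩ = g ⟨a, ha.2⟩) :
    ∃ h : ↥(S ∪ T) → ℝ, h ∘ Set.inclusion Set.subset_union_left = f ∧
      h ∘ Set.inclusion Set.subset_union_right = g := by
  classical
  refine ⟨fun a => if ha : a.1 ∈ S then f ⟨a, ha⟩ else g ⟨a, a.2.resolve_left ha⟩,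
    funext fun a => dif_pos a.2, funext fun a => ?_⟩
  by_cases ha : a.1 ∈ S
  · exact (dif_pos ha).trans (hfg a ⟨ha, a.2⟩)
  · exact dif_neg ha

lemma restrictPairQ_surjective {p : α} (hST : S ∩ T = {p}) :
    Function.Surjective (restrictPairQ S T) := by
  rintro ⟨⟨f⟩, ⟨g⟩⟩
  have hp : p ∈ S ∩ T := hST ▸ rfl
  obtain ⟨h, hf, hg⟩ := exists_comp_inclusion_eq f (g + fun _ => f ⟨p, hp.1⟩ - g ⟨p, hp.2⟩)
    fun a ha => by
      obtain rfl : a = p := (hST ▸ ha :)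
      simp
  refine ⟨h, Prod.ext (congrArg Submodule.Quotient.mk hf) ?_⟩
  exact (congrArg Submodule.Quotient.mk hg).trans (mk_add_const_eq g _)

end QuotByOne

namespace MinAchievedTwice

variable {α : Type*} {x : α → ℝ}

lemma exists_ne_forall_le {C : Set α} (h : MinAchievedTwice C x) (q : α) :
    ∃ a ∈ C, a ≠ q ∧ ∀ k ∈ C, x a ≤ x k := by
  obtain ⟨i, hi, j, hj, hij, hxij, hmin⟩ := h
  by_cases hiq : i = q
  · exact ⟨j, hj, fun hjq => hij (hiq.trans hjq.symm), fun k hk => hxij ▸ hmin k hk⟩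
  · exact ⟨i, hi, hiq, hmin⟩

lemma of_insert_of_lt {I : Set α} {p : α} (h : MinAchievedTwice (insert p I) x)
    {a : α} (ha : a ∈ I) (hlt : x a < x p) : MinAchievedTwice I x := by
  obtain ⟨i, hi, j, hj, hij, hxij, hmin⟩ := h
  have hip : x i < x p := (hmin a (Set.mem_insert_of_mem p ha)).trans_lt hlt
  have hi' : i ∈ I := hi.resolve_left (by rintro rfl; exact hip.false)
  have hj' : j ∈ I := hj.resolve_left (by rintro rfl; exact (hxij ▸ hip).false)
  exact ⟨i, hi', j, hj', hij, hxij, fun k hk => hmin k (Set.mem_insert_of_mem p hk)⟩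

lemma union_of_forall_exists_le {A B : Set α} (h : MinAchievedTwice A x)
    (hB : ∀ k ∈ B, ∃ a ∈ A, x a ≤ x k) : MinAchievedTwice (A ∪ B) x := by
  obtain ⟨i, hi, j, hj, hij, hxij, hmin⟩ := h
  refine ⟨i, Or.inl hi, j, Or.inl hj, hij, hxij, ?_⟩
  rintro k (hk | hk)
  · exact hmin k hk
  · obtain ⟨a, ha, hak⟩ := hB k hk
    exact (hmin a ha).trans hak

/-- Compare the two minima: a strictly smaller one lies below `x p`, so it is achieved twice
inside its own `I_i`; if they are equal, each `I_i` contains a minimizer. -/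
lemma union_of_insert {I₁ I₂ : Set α} {p : α} (hdisj : Disjoint I₁ I₂)
    (h₁ : MinAchievedTwice (insert p I₁) x) (h₂ : MinAchievedTwice (insert p I₂) x) :
    MinAchievedTwice (I₁ ∪ I₂) x := by
  obtain ⟨a₁, ha₁, ha₁p, hmin₁⟩ := h₁.exists_ne_forall_le p
  obtain ⟨a₂, ha₂, ha₂p, hmin₂⟩ := h₂.exists_ne_forall_le p
  replace ha₁ : a₁ ∈ I₁ := ha₁.resolve_left ha₁p
  replace ha₂ : a₂ ∈ I₂ := ha₂.resolve_left ha₂p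
  wlog hle : x a₁ ≤ x a₂ generalizing I₁ I₂ a₁ a₂
  · rw [Set.union_comm]
    exact this hdisj.symm h₂ h₁ a₂ ha₂p hmin₂ a₁ ha₁p hmin₁ ha₂ ha₁ (le_of_not_ge hle)
  rcases hle.lt_or_eq with hlt | heq
  · have hI₁ : MinAchievedTwice I₁ x :=
      h₁.of_insert_of_lt ha₁ (hlt.trans_le (hmin₂ p (Set.mem_insert p I₂)))
    exact hI₁.union_of_forall_exists_le fun k hk =>
      ⟨a₁, ha₁, hle.trans (hmin₂ k (Set.mem_insert_of_mem p hk))⟩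
  · refine ⟨a₁, Or.inl ha₁, a₂, Or.inr ha₂, hdisj.ne_of_mem ha₁ ha₂, heq, ?_⟩
    rintro k (hk | hk)
    · exact hmin₁ k (Set.mem_insert_of_mem p hk)
    · exact heq ▸ hmin₂ k (Set.mem_insert_of_mem p hk)

end MinAchievedTwice

section Bergman

variable {α : Type*} {M₁ M₂ M : Matroid α} {p : α}

lemma ParallelCircuit.minAchievedTwice (hmeet : M₁.E ∩ M₂.E ⊆ {p}) {x : α → ℝ}
    (h₁ : InBergmanSupport M₁ x) (h₂ : InBergmanSupport M₂ x) {C : Set α}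
    (hC : ParallelCircuit M₁ M₂ p C) : MinAchievedTwice C x := by
  rcases hC with hC₁ | hC₂ | ⟨I₁, I₂, hpI₁, hpI₂, hC₁, hC₂, rfl⟩
  · exact h₁ C hC₁
  · exact h₂ C hC₂
  · have hdisj : Disjoint I₁ I₂ := Set.disjoint_left.2 fun a ha₁ ha₂ => by
      have hap : a = p :=
        hmeet ⟨hC₁.1 (Set.mem_insert_of_mem p ha₁), hC₂.1 (Set.mem_insert_of_mem p ha₂)⟩
      exact hpI₁ (hap ▸ ha₁)
    exact (h₁ _ hC₁).union_of_insert hdisj (h₂ _ hC₂)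

lemma inBergmanSupport_iff_of_isCircuit_iff_parallelCircuit (hmeet : M₁.E ∩ M₂.E ⊆ {p})
    (hC : ∀ C, IsCircuit M C ↔ ParallelCircuit M₁ M₂ p C) (x : α → ℝ) :
    InBergmanSupport M x ↔ InBergmanSupport M₁ x ∧ InBergmanSupport M₂ x :=
  ⟨fun h => ⟨fun C hC₁ => h C ((hC C).2 (Or.inl hC₁)),
      fun C hC₂ => h C ((hC C).2 (Or.inr (Or.inl hC₂)))⟩,
    fun ⟨h₁, h₂⟩ C hCM => ((hC C).1 hCM).minAchievedTwice hmeet h₁ h₂⟩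

end Bergman

theorem parallelConnection_bergman_iso_general {α : Type*} (M₁ M₂ M : Matroid α) (p : α)
    (hmeet : M₁.E ∩ M₂.E = {p})
    (hC : ∀ C, IsCircuit M C ↔ ParallelCircuit M₁ M₂ p C) :
    (∃ Φ : QuotByOne (M₁.E ∪ M₂.E) ≃ₗ[ℝ] QuotByOne M₁.E × QuotByOne M₂.E,
      ∀ x : ↥(M₁.E ∪ M₂.E) → ℝ,
        Φ (Submodule.Quotient.mk x) =
          (Submodule.Quotient.mk (x ∘ Set.inclusion Set.subset_union_left),
           Submodule.Quotient.mk (x ∘ Set.inclusion Set.subset_union_right))) ∧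
    (∀ x : α → ℝ, InBergmanSupport M x ↔ InBergmanSupport M₁ x ∧ InBergmanSupport M₂ x) := by
  have hker := ker_restrictPairQ (hmeet ▸ rfl : p ∈ M₁.E ∩ M₂.E)
  refine ⟨⟨Submodule.quotEquivOfEq _ _ hker.symm ≪≫ₗ
      (restrictPairQ M₁.E M₂.E).quotKerEquivOfSurjective (restrictPairQ_surjective hmeet),
      fun x => rfl⟩,
    inBergmanSupport_iff_of_isCircuit_iff_parallelCircuit hmeet.subset hC⟩

/-- let `M` be the parallel connection of loopless matroids `M₁`, `M₂` at
the identified basepoint `p`.  Then the linear map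
`φ : ℝ^E/ℝ·1 → (ℝ^{E₁}/ℝ·1) ⊕ (ℝ^{E₂}/ℝ·1)` induced by restriction of functions (which
sends `ē_x ↦ ē_x` for `x ≠ p` and `ē_p ↦ ē_{p₁} + ē_{p₂}`) is a vector space isomorphism,
and a point lies in the support of the Bergman fan of `M` iff its image under `φ` lies in
the support of the product of the Bergman fans of `M₁` and `M₂`. -/
theorem parallelConnection_bergman_iso {α : Type*} (M₁ M₂ M : Matroid α) (p : α)
    (hl₁ : MLoopless M₁) (hl₂ : MLoopless M₂)
    (hmeet : M₁.E ∩ M₂.E = {p})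
    (hE : M.E = M₁.E ∪ M₂.E)
    (hC : ∀ C, IsCircuit M C ↔ ParallelCircuit M₁ M₂ p C) :
    (∃ Φ : QuotByOne (M₁.E ∪ M₂.E) ≃ₗ[ℝ] QuotByOne M₁.E × QuotByOne M₂.E,
      ∀ x : ↥(M₁.E ∪ M₂.E) → ℝ,
        Φ (Submodule.Quotient.mk x) =
          (Submodule.Quotient.mk (x ∘ Set.inclusion Set.subset_union_left),
           Submodule.Quotient.mk (x ∘ Set.inclusion Set.subset_union_right))) ∧
    (∀ x : α → ℝ, InBergmanSupport M x ↔ InBergmanSupport M₁ x ∧ InBergmanSupport M₂ x) :=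
  parallelConnection_bergman_iso_general M₁ M₂ M p hmeet hC
end

section
/- Let Σ be a polyhedral fan in a real vector space V and Σ' a refinement of Σ (every cone of Σ' is contained in a cone of Σ and the supports agree). Then for every p ≥ 0, the subspace F_p(Σ) of ⋀^p V spanned by wedges v_1 ∧ ⋯ ∧ v_p of vectors lying in a common cone of Σ equals F_p(Σ'). -/
open scoped BigOperators

/-- A finitely generated (polyhedral) convex cone in a real vector space. -/
def IsPolyhedralCone {V : Type*} [AddCommGroup V] [Module ℝ V] (σ : Set V) : Prop :=
  ∃ t : Finset V, σ = {x | ∃ c : V → ℝ, (∀ v, 0 ≤ c v) ∧ x = ∑ v ∈ t, c v • v}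

/-- `F` is a face of the cone `σ`. -/
def IsFaceOf {V : Type*} [AddCommGroup V] [Module ℝ V] (F σ : Set V) : Prop :=
  F ⊆ σ ∧ ∀ x ∈ σ, ∀ y ∈ σ, x + y ∈ F → x ∈ F ∧ y ∈ F

/-- A polyhedral fan: a finite collection of polyhedral cones, closed under taking faces,
such that the intersection of any two cones is a face of each. -/
def IsFan {V : Type*} [AddCommGroup V] [Module ℝ V] (S : Set (Set V)) : Prop :=
  S.Finite ∧ (∀ σ ∈ S, IsPolyhedralCone σ) ∧
    (∀ σ ∈ S, ∀ F, IsPolyhedralCone F → IsFaceOf F σ → F ∈ S) ∧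
    (∀ σ ∈ S, ∀ τ ∈ S, IsFaceOf (σ ∩ τ) σ)

/-- `F_p(Σ) ⊆ ⋀^p V`: the span of the wedges `v₁ ∧ ⋯ ∧ v_p` of vectors lying in a common
cone of `Σ`, realized inside the exterior algebra of `V`. -/
def FpFan {V : Type*} [AddCommGroup V] [Module ℝ V] (S : Set (Set V)) (p : ℕ) :
    Submodule ℝ (ExteriorAlgebra ℝ V) :=
  Submodule.span ℝ {w | ∃ σ ∈ S, ∃ v : Fin p → V, (∀ i, v i ∈ σ) ∧
    w = (List.ofFn fun i => ExteriorAlgebra.ι ℝ (v i)).prod}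

section Aux
variable {V : Type*} [AddCommGroup V] [Module ℝ V]

/-- Abstract convex cone property: contains `0`, closed under addition and
nonnegative scaling. -/
def IsConeAux (C : Set V) : Prop :=
  0 ∈ C ∧ (∀ x ∈ C, ∀ y ∈ C, x + y ∈ C) ∧ ∀ r : ℝ, 0 ≤ r → ∀ x ∈ C, r • x ∈ C

lemma isConeAux_of_polyhedral {σ : Set V} (h : IsPolyhedralCone σ) : IsConeAux σ := by
  obtain ⟨t, rfl⟩ := h
  refine ⟨⟨fun _ => 0, fun _ => le_refl 0, by simp⟩, ?_, ?_⟩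
  · rintro x ⟨c, hc, rfl⟩ y ⟨d, hd, rfl⟩
    exact ⟨fun v => c v + d v, fun v => add_nonneg (hc v) (hd v), by
      rw [← Finset.sum_add_distrib]; simp [add_smul]⟩
  · rintro r hr x ⟨c, hc, rfl⟩
    exact ⟨fun v => r * c v, fun v => mul_nonneg hr (hc v), by
      rw [Finset.smul_sum]; simp [smul_smul]⟩

lemma isConeAux_inter {C D : Set V} (hC : IsConeAux C) (hD : IsConeAux D) :
    IsConeAux (C ∩ D) := by
  refine ⟨⟨hC.1, hD.1⟩, ?_, ?_⟩
  · rintro x ⟨hx1, hx2⟩ y ⟨hy1, hy2⟩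
    exact ⟨hC.2.1 x hx1 y hy1, hD.2.1 x hx2 y hy2⟩
  · rintro r hr x ⟨hx1, hx2⟩
    exact ⟨hC.2.2 r hr x hx1, hD.2.2 r hr x hx2⟩

lemma mem_sub_of_mem_span {C : Set V} (hC : IsConeAux C) {x : V}
    (hx : x ∈ Submodule.span ℝ C) : ∃ a ∈ C, ∃ b ∈ C, x = a - b := by
  induction hx using Submodule.span_induction with
  | mem z hz => exact ⟨z, hz, 0, hC.1, by simp⟩
  | zero => exact ⟨0, hC.1, 0, hC.1, by simp⟩
  | add y z _ _ hy hz =>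
      obtain ⟨a, ha, b, hb, rfl⟩ := hy
      obtain ⟨a', ha', b', hb', rfl⟩ := hz
      exact ⟨a + a', hC.2.1 a ha a' ha', b + b', hC.2.1 b hb b' hb', by abel⟩
  | smul r y _ hy =>
      obtain ⟨a, ha, b, hb, rfl⟩ := hy
      rcases le_total 0 r with h | h
      · exact ⟨r • a, hC.2.2 r h a ha, r • b, hC.2.2 r h b hb, by rw [smul_sub]⟩
      · refine ⟨(-r) • b, hC.2.2 (-r) (by linarith) b hb,
          (-r) • a, hC.2.2 (-r) (by linarith) a ha, ?_⟩
        rw [smul_sub]; module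

lemma sum_mem_cone {C : Set V} (hC : IsConeAux C) {k : ℕ} (u : Fin k → V)
    (hu : ∀ m, u m ∈ C) (c : Fin k → ℝ) (hc : ∀ m, 0 ≤ c m) :
    ∑ m, c m • u m ∈ C := by
  classical
  refine Finset.sum_induction _ (· ∈ C) (fun a b ha hb => hC.2.1 a ha b hb) hC.1 ?_
  intro m _
  exact hC.2.2 (c m) (hc m) (u m) (hu m)

lemma mem_of_matrix_combo {k : ℕ} {A : Matrix (Fin k) (Fin k) ℝ} (hA : IsUnit A.det)
    (u y : Fin k → V) (hy : ∀ m, y m = ∑ j, A m j • u j)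
    (P : Submodule ℝ V) (hyP : ∀ m, y m ∈ P) : ∀ j, u j ∈ P := by
  intro j
  have key : u j = ∑ m, A⁻¹ j m • y m := by
    simp only [hy, Finset.smul_sum, smul_smul]
    rw [Finset.sum_comm]
    have : ∀ l, ∑ m, (A⁻¹ j m * A m l) • u l = ((A⁻¹ * A) j l) • u l := by
      intro l
      rw [← Finset.sum_smul, Matrix.mul_apply]
    simp only [this, Matrix.nonsing_inv_mul A hA, Matrix.one_apply]
    simp [ite_smul]
  rw [key]
  exact Submodule.sum_mem _ fun m _ => Submodule.smul_mem _ _ (hyP m)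

/-- The key covering lemma: if a polyhedral cone `σ` is covered by a finite family `S'` of
sets, then some member `σ'` of the family satisfies `span σ = span (σ ∩ σ')`. -/
lemma exists_span_inter {σ : Set V} (hσ : IsPolyhedralCone σ) (S' : Set (Set V))
    (hfin : S'.Finite) (hcover : σ ⊆ ⋃₀ S') :
    ∃ σ' ∈ S', Submodule.span ℝ σ ≤ Submodule.span ℝ (σ ∩ σ') := by
  classical
  have hcone := isConeAux_of_polyhedral hσ
  obtain ⟨t, htσ⟩ := hσ
  have htsub : (t : Set V) ⊆ σ := by
    intro u hu
    rw [htσ]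
    refine ⟨fun v => if v = u then 1 else 0, fun v => by positivity, ?_⟩
    simp only [ite_smul, one_smul, zero_smul]
    rw [Finset.sum_ite_eq' t u (fun v => v)]
    simp [Finset.mem_coe.mp hu]
  have hspan : Submodule.span ℝ σ ≤ Submodule.span ℝ (t : Set V) := by
    rw [Submodule.span_le]
    intro x hx
    rw [htσ] at hx
    obtain ⟨c, hc, rfl⟩ := hx
    exact Submodule.sum_mem _ fun v hv =>
      Submodule.smul_mem _ _ (Submodule.subset_span hv)
  set k := t.card with hk
  set e : Fin k → V := fun m => (t.equivFin.symm m : V) with he_def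
  have he : ∀ m, e m ∈ t := fun m => (t.equivFin.symm m).2
  set x : ℕ → V := fun n => ∑ m : Fin k, ((n : ℝ) ^ (m.val)) • e m with hx_def
  have hx : ∀ n, x n ∈ σ := fun n =>
    sum_mem_cone hcone e (fun m => htsub (he m)) _
      (fun m => pow_nonneg (Nat.cast_nonneg n) _)
  have hchoice : ∀ n : ℕ, ∃ τ, τ ∈ S' ∧ x n ∈ τ := by
    intro n
    obtain ⟨τ, hτ, hxτ⟩ := hcover (hx n)
    exact ⟨τ, hτ, hxτ⟩
  choose g hg1 hg2 using hchoice
  have : Finite ↥S' := hfin.to_subtype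
  obtain ⟨⟨σ', hσ'⟩, hinf⟩ :=
    Finite.exists_infinite_fiber (fun n => (⟨g n, hg1 n⟩ : S'))
  refine ⟨σ', hσ', ?_⟩
  set s : Set ℕ := (fun n => (⟨g n, hg1 n⟩ : S')) ⁻¹' {⟨σ', hσ'⟩} with hs_def
  have : Infinite ↥s := hinf
  let emb := Infinite.natEmbedding ↥s
  set r : Fin k → ℝ := fun m => ((emb m.val : ℕ) : ℝ) with hr_def
  have hr : Function.Injective r := by
    intro m m' h
    have h1 : ((emb m.val : ℕ)) = ((emb m'.val : ℕ)) := Nat.cast_injective h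
    have h2 : emb m.val = emb m'.val := Subtype.val_injective h1
    exact Fin.val_injective (emb.injective h2)
  have hA : IsUnit (Matrix.vandermonde r).det := by
    rw [isUnit_iff_ne_zero]
    exact Matrix.det_vandermonde_ne_zero_iff.mpr hr
  have key := mem_of_matrix_combo hA e (fun m => x (emb m.val))
    (fun m => by simp [Matrix.vandermonde, hx_def, hr_def]) (Submodule.span ℝ (σ ∩ σ'))
    (fun m => by
      refine Submodule.subset_span ⟨hx _, ?_⟩
      have hmem : (emb m.val).val ∈ s := (emb m.val).2
      have : g (emb m.val).val = σ' := congrArg Subtype.val hmem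
      rw [← this]
      exact hg2 _)
  refine hspan.trans ?_
  rw [Submodule.span_le]
  intro u hu
  have : e (t.equivFin ⟨u, hu⟩) = u := by simp [he_def]
  rw [← this]
  exact key _

/-- Multilinear expansion: a wedge of differences of elements of `σ'` lies in the span of
the wedges of elements of `σ'`. -/
lemma expand_wedge (σ' : Set V) :
    ∀ (p : ℕ) (v : Fin p → V), (∀ i, ∃ a ∈ σ', ∃ b ∈ σ', v i = a - b) →
    (List.ofFn fun i => ExteriorAlgebra.ι ℝ (v i)).prod ∈
      Submodule.span ℝ {w | ∃ u : Fin p → V, (∀ i, u i ∈ σ') ∧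
        w = (List.ofFn fun i => ExteriorAlgebra.ι ℝ (u i)).prod} := by
  intro p
  induction p with
  | zero =>
      intro v _
      exact Submodule.subset_span ⟨fun i => i.elim0, fun i => i.elim0, by simp⟩
  | succ p ih =>
      intro v hv
      obtain ⟨a, ha, b, hb, hab⟩ := hv 0
      have hsplit : (List.ofFn fun i : Fin (p+1) => ExteriorAlgebra.ι ℝ (v i)).prod =
          ExteriorAlgebra.ι ℝ (v 0) *
            (List.ofFn fun i : Fin p => ExteriorAlgebra.ι ℝ (v i.succ)).prod := by
        rw [List.ofFn_succ]; rfl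
      have hrest := ih (fun i => v i.succ) (fun i => hv i.succ)
      have hmul : ∀ c ∈ σ', ∀ x ∈ Submodule.span ℝ {w | ∃ u : Fin p → V,
          (∀ i, u i ∈ σ') ∧ w = (List.ofFn fun i => ExteriorAlgebra.ι ℝ (u i)).prod},
          ExteriorAlgebra.ι ℝ c * x ∈ Submodule.span ℝ {w | ∃ u : Fin (p+1) → V,
          (∀ i, u i ∈ σ') ∧ w = (List.ofFn fun i => ExteriorAlgebra.ι ℝ (u i)).prod} := by
        intro c hc x hx
        induction hx using Submodule.span_induction with
        | mem z hz =>
            obtain ⟨u, hu, rfl⟩ := hz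
            refine Submodule.subset_span ⟨Fin.cons c u, ?_, ?_⟩
            · intro i
              refine Fin.cases ?_ ?_ i
              · simpa using hc
              · intro j; simpa using hu j
            · rw [List.ofFn_succ]
              simp only [Fin.cons_zero, Fin.cons_succ]
              rfl
        | zero => simp
        | add y z _ _ hy hz => rw [mul_add]; exact Submodule.add_mem _ hy hz
        | smul r y _ hy => rw [mul_smul_comm]; exact Submodule.smul_mem _ _ hy
      rw [hsplit, hab, map_sub, sub_mul]
      exact Submodule.sub_mem _ (hmul a ha _ hrest) (hmul b hb _ hrest)

end Aux

/-- if `Σ'` is a refinement of the polyhedral fan `Σ` (same support, every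
cone of `Σ'` contained in a cone of `Σ`), then `F_p(Σ) = F_p(Σ')` for every `p ≥ 0`. -/
theorem FpFan_refinement {V : Type*} [AddCommGroup V] [Module ℝ V]
    (S S' : Set (Set V)) (hS : IsFan S) (hS' : IsFan S')
    (hsupp : ⋃₀ S = ⋃₀ S')
    (href : ∀ σ' ∈ S', ∃ σ ∈ S, σ' ⊆ σ) :
    ∀ p : ℕ, FpFan S p = FpFan S' p := by
  intro p
  apply le_antisymm
  · rw [FpFan, Submodule.span_le]
    rintro w ⟨σ, hσS, v, hv, rfl⟩
    have hpoly := hS.2.1 σ hσS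
    have hcover : σ ⊆ ⋃₀ S' := by
      have h1 : σ ⊆ ⋃₀ S := fun x hx => ⟨σ, hσS, hx⟩
      rwa [hsupp] at h1
    obtain ⟨σ', hσ'S', hle⟩ := exists_span_inter hpoly S' hS'.1 hcover
    have hconeInter : IsConeAux (σ ∩ σ') :=
      isConeAux_inter (isConeAux_of_polyhedral hpoly)
        (isConeAux_of_polyhedral (hS'.2.1 σ' hσ'S'))
    have hv' : ∀ i, ∃ a ∈ σ', ∃ b ∈ σ', v i = a - b := by
      intro i
      have hmem : v i ∈ Submodule.span ℝ (σ ∩ σ') :=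
        hle (Submodule.subset_span (hv i))
      obtain ⟨a, ha, b, hb, h⟩ := mem_sub_of_mem_span hconeInter hmem
      exact ⟨a, ha.2, b, hb.2, h⟩
    exact Submodule.span_le.mpr
      (by rintro w ⟨u, hu, rfl⟩
          exact Submodule.subset_span ⟨σ', hσ'S', u, hu, rfl⟩)
      (expand_wedge σ' p v hv')
  · rw [FpFan, Submodule.span_le]
    rintro w ⟨σ', hσ', v, hv, rfl⟩
    obtain ⟨σ, hσ, hsub⟩ := href σ' hσ'
    exact Submodule.subset_span ⟨σ, hσ, v, fun i => hsub (hv i), rfl⟩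
end

section
/- Let P be a 2-dimensional complete unimodular (smooth projective) fan in R^2 with rays ρ_1, …, ρ_n in cyclic order and primitive generators w_1, …, w_n, and define integers τ_i by -τ_i w_i = w_{i-1} + w_{i+1} (indices mod n). Then 12 = 3n + Σ_{i=1}^{n} τ_i. -/
open scoped BigOperators

/-- The determinant of two integer vectors in the plane. -/
def det2 (a b : ℤ × ℤ) : ℤ := a.1 * b.2 - a.2 * b.1

/-- An integer vector regarded as a real vector. -/
def toR (v : ℤ × ℤ) : ℝ × ℝ := ((v.1 : ℝ), (v.2 : ℝ))

/-- The closed 2-dimensional cone of a complete fan in `ℝ²` spanned by the `i`-th and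
`(i+1)`-st rays. -/
def maxCone {n : ℕ} (w : ZMod n → ℤ × ℤ) (i : ZMod n) : Set (ℝ × ℝ) :=
  {x | ∃ a b : ℝ, 0 ≤ a ∧ 0 ≤ b ∧ x = a • toR (w i) + b • toR (w (i + 1))}

/-- The open (relative interior of the) 2-dimensional cone spanned by the `i`-th and
`(i+1)`-st rays. -/
def maxConeInt {n : ℕ} (w : ZMod n → ℤ × ℤ) (i : ZMod n) : Set (ℝ × ℝ) :=
  {x | ∃ a b : ℝ, 0 < a ∧ 0 < b ∧ x = a • toR (w i) + b • toR (w (i + 1))}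

/-!
Put `d i = det2 (w (i - 1)) (w (i + 1))`. Since consecutive rays form a basis,
`w (i - 1) + w (i + 1) = d i • w i`, so `d i = -τ i` and the claim reads `∑ d i = 3 n - 12`.
For `n = 3, 4` this is a direct computation. For `n ≥ 5` some ray has `d i = 1`, i.e.
`w i = w (i - 1) + w (i + 1)`. Otherwise, take a ray with `d ≤ 0` (one exists, or the
determinants `det2 (w 0) (w j)` would grow convexly all the way round). The rays sitting in a
half-plane form convex chains, and completeness means every ray is passed only once. Together
these give determinant bounds that contradict unimodularity. Removing a ray with `d i = 1`
(blowing it down) leaves a smooth complete fan with `n - 1` rays and lowers the sum by `3`.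
-/

namespace ToricNoether

@[simp] lemma det2_self (a : ℤ × ℤ) : det2 a a = 0 := by
  simp only [det2]; ring

lemma det2_swap (a b : ℤ × ℤ) : det2 b a = -det2 a b := by
  simp only [det2]; ring

@[simp] lemma det2_add_left (a b c : ℤ × ℤ) : det2 (a + b) c = det2 a c + det2 b c := by
  simp only [det2, Prod.fst_add, Prod.snd_add]; ring

@[simp] lemma det2_add_right (a b c : ℤ × ℤ) : det2 a (b + c) = det2 a b + det2 a c := by
  simp only [det2, Prod.fst_add, Prod.snd_add]; ring

@[simp] lemma det2_smul_left (c : ℤ) (a b : ℤ × ℤ) : det2 (c • a) b = c * det2 a b := by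
  simp only [det2, Prod.smul_fst, Prod.smul_snd, smul_eq_mul]; ring

@[simp] lemma det2_smul_right (c : ℤ) (a b : ℤ × ℤ) : det2 a (c • b) = c * det2 a b := by
  simp only [det2, Prod.smul_fst, Prod.smul_snd, smul_eq_mul]; ring

lemma det2_mul_det2 (u v a b : ℤ × ℤ) :
    det2 u v * det2 a b = det2 u a * det2 v b - det2 v a * det2 u b := by
  simp only [det2]; ring

lemma eq_smul_add_smul_of_det2_eq_one {u v : ℤ × ℤ} (h : det2 u v = 1) (z : ℤ × ℤ) :
    z = det2 z v • u + det2 u z • v := by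
  simp only [det2] at h ⊢
  ext <;> simp only [Prod.fst_add, Prod.snd_add, Prod.smul_fst, Prod.smul_snd, smul_eq_mul]
  · linear_combination (-z.1) * h
  · linear_combination (-z.2) * h

lemma toR_eq_smul_add_smul_iff {u v : ℤ × ℤ} (h : det2 u v = 1) (z : ℤ × ℤ) (a b : ℝ) :
    toR z = a • toR u + b • toR v ↔ a = det2 z v ∧ b = det2 u z := by
  have hR : (u.1 : ℝ) * v.2 - u.2 * v.1 = 1 := by
    simp only [det2] at h; exact_mod_cast h
  simp only [toR, det2, Prod.ext_iff, Prod.fst_add, Prod.snd_add, Prod.smul_mk, smul_eq_mul]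
  push_cast
  constructor
  · rintro ⟨h1, h2⟩
    constructor
    · linear_combination (-(v.2 : ℝ)) * h1 + (v.1 : ℝ) * h2 - a * hR
    · linear_combination (u.2 : ℝ) * h1 - (u.1 : ℝ) * h2 - b * hR
  · rintro ⟨rfl, rfl⟩
    constructor
    · linear_combination (-(z.1 : ℝ)) * hR
    · linear_combination (-(z.2 : ℝ)) * hR

lemma toR_mem_maxCone_iff {n : ℕ} {w : ZMod n → ℤ × ℤ} {i : ZMod n}
    (h : det2 (w i) (w (i + 1)) = 1) (z : ℤ × ℤ) :
    toR z ∈ maxCone w i ↔ 0 ≤ det2 (w i) z ∧ 0 ≤ det2 z (w (i + 1)) := by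
  simp only [maxCone, Set.mem_ofPred_eq, toR_eq_smul_add_smul_iff h]
  constructor
  · rintro ⟨a, b, ha, hb, rfl, rfl⟩
    exact ⟨by exact_mod_cast hb, by exact_mod_cast ha⟩
  · rintro ⟨hb, ha⟩
    exact ⟨_, _, by exact_mod_cast ha, by exact_mod_cast hb, rfl, rfl⟩

lemma toR_mem_maxConeInt_iff {n : ℕ} {w : ZMod n → ℤ × ℤ} {i : ZMod n}
    (h : det2 (w i) (w (i + 1)) = 1) (z : ℤ × ℤ) :
    toR z ∈ maxConeInt w i ↔ 0 < det2 (w i) z ∧ 0 < det2 z (w (i + 1)) := by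
  simp only [maxConeInt, Set.mem_ofPred_eq, toR_eq_smul_add_smul_iff h]
  constructor
  · rintro ⟨a, b, ha, hb, rfl, rfl⟩
    exact ⟨by exact_mod_cast hb, by exact_mod_cast ha⟩
  · rintro ⟨hb, ha⟩
    exact ⟨_, _, by exact_mod_cast ha, by exact_mod_cast hb, rfl, rfl⟩

def halfOpenCone (u v : ℤ × ℤ) : Set (ℤ × ℤ) := {z | 0 ≤ det2 u z ∧ 0 < det2 z v}

def openCone (u v : ℤ × ℤ) : Set (ℤ × ℤ) := {z | 0 < det2 u z ∧ 0 < det2 z v}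

lemma halfOpenCone_eq_union_add (u v : ℤ × ℤ) :
    halfOpenCone u v = halfOpenCone u (u + v) ∪ halfOpenCone (u + v) v := by
  ext z
  simp only [halfOpenCone, Set.mem_union, Set.mem_ofPred_eq, det2_add_left, det2_add_right,
    det2_swap z u, det2_swap z v]
  omega

/-- The witness is `N • z + v` for large `N`. -/
lemma exists_mem_openCone_inter {u v u' v' z : ℤ × ℤ} (h : det2 u v = 1) (h' : det2 u' v' = 1)
    (hz : z ∈ halfOpenCone u v) (hz' : z ∈ halfOpenCone u' v') :
    ∃ y, y ∈ openCone u v ∧ y ∈ openCone u' v' := by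
  obtain ⟨hu, hv⟩ := hz
  obtain ⟨hu', hv'⟩ := hz'
  have hpl := det2_mul_det2 u' v' z v
  rw [h', one_mul, det2_swap z v'] at hpl
  set N := 1 + |det2 v v'| + |det2 u' v| with hN
  have hlarge : ∀ {a b : ℤ}, 1 ≤ a → |b| < N → 0 < N * a + b := by
    intro a b ha hb
    nlinarith [neg_abs_le b, abs_nonneg b]
  have hN1 : |det2 v v'| < N := by linarith [abs_nonneg (det2 u' v)]
  have hN2 : |det2 u' v| < N := by linarith [abs_nonneg (det2 v v')]
  refine ⟨N • z + v, ⟨?_, ?_⟩, ⟨?_, ?_⟩⟩ <;>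
    simp only [det2_add_left, det2_add_right, det2_smul_left, det2_smul_right, det2_self, h,
      add_zero]
  · nlinarith [abs_nonneg (det2 v v')]
  · exact mul_pos (hN1.trans_le' (abs_nonneg _)) hv
  · rcases hu'.lt_or_eq with hpos | hzero
    · exact hlarge hpos hN2
    · rw [← hzero] at hpl ⊢
      nlinarith
  · exact hlarge hv' hN1

/-- Lattice form of a complete unimodular fan with rays `w i` in counterclockwise cyclic order:
consecutive rays form a basis, and the half-open cones `[w i, w (i + 1))` partition
`ℤ² ∖ {0}`. -/
structure IsSmoothFan (n : ℕ) (w : ZMod n → ℤ × ℤ) : Prop where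
  det2_succ : ∀ i, det2 (w i) (w (i + 1)) = 1
  exists_mem : ∀ z ≠ 0, ∃ i, z ∈ halfOpenCone (w i) (w (i + 1))
  eq_of_mem : ∀ {z i j}, z ∈ halfOpenCone (w i) (w (i + 1)) →
    z ∈ halfOpenCone (w j) (w (j + 1)) → i = j

lemma isSmoothFan_of_cover {n : ℕ} {w : ZMod n → ℤ × ℤ}
    (hdet : ∀ i, det2 (w i) (w (i + 1)) = 1) (hcov : (⋃ i, maxCone w i) = Set.univ)
    (hdisj : ∀ i j, i ≠ j → maxConeInt w i ∩ maxConeInt w j = ∅) : IsSmoothFan n w where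
  det2_succ := hdet
  exists_mem z hz := by
    obtain ⟨i, hi⟩ := Set.mem_iUnion.mp (hcov.symm ▸ Set.mem_univ (toR z))
    obtain ⟨hiz, hzi⟩ := (toR_mem_maxCone_iff (hdet i) z).mp hi
    rcases hzi.lt_or_eq with hpos | hzero
    · exact ⟨i, hiz, hpos⟩
    · -- `z` lies on the ray of `w (i + 1)`, so it belongs to the next half-open cone
      have hz' := eq_smul_add_smul_of_det2_eq_one (hdet i) z
      rw [← hzero, zero_smul, zero_add] at hz'
      have hc : det2 (w i) z ≠ 0 := fun h0 => hz (by rw [hz', h0, zero_smul])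
      refine ⟨i + 1, ?_, ?_⟩ <;> rw [hz']
      · rw [det2_smul_right, det2_self, mul_zero]
      · rw [det2_smul_left, hdet (i + 1)]; omega
  eq_of_mem {z i j} hi hj := by
    by_contra hij
    obtain ⟨y, hyi, hyj⟩ := exists_mem_openCone_inter (hdet i) (hdet j) hi hj
    have hy : toR y ∈ maxConeInt w i ∩ maxConeInt w j :=
      ⟨(toR_mem_maxConeInt_iff (hdet i) y).mpr hyi, (toR_mem_maxConeInt_iff (hdet j) y).mpr hyj⟩
    rw [hdisj i j hij] at hy
    exact hy

lemma le_of_two_le_of_add_eq_mul {f d : ℕ → ℤ} (h0 : f 0 = 0) (h1 : f 1 = 1)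
    (hrec : ∀ j, f j + f (j + 2) = d (j + 1) * f (j + 1)) {b : ℕ}
    (hd : ∀ j, 1 ≤ j → j < b → 2 ≤ d j) : ∀ j ≤ b, (j : ℤ) ≤ f j := by
  have step : ∀ j, j + 1 ≤ b → f j + 1 ≤ f (j + 1) ∧ (j : ℤ) + 1 ≤ f (j + 1) := by
    intro j
    induction j with
    | zero => intro _; simp [h0, h1]
    | succ j ih =>
      intro hj
      obtain ⟨hinc, hlow⟩ := ih (by omega)
      have h2 := hd (j + 1) (by omega) (by omega)
      have hr := hrec j
      push_cast at hlow ⊢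
      constructor <;> nlinarith
  intro j hj
  cases j with
  | zero => simp [h0]
  | succ j => exact_mod_cast (step j hj).2

/-- Where `f` is positive, `d j * f j = f (j - 1) + f (j + 1) > 0` forces `d j ≥ 2`. -/
lemma le_of_pos_of_add_eq_mul {f d : ℕ → ℤ} (h0 : f 0 = 0) (h1 : f 1 = 1)
    (hrec : ∀ j, f j + f (j + 2) = d (j + 1) * f (j + 1)) (hd : ∀ j, d j ≠ 1) {b : ℕ}
    (hpos : ∀ j, 1 ≤ j → j ≤ b → 0 < f j) : ∀ j ≤ b, (j : ℤ) ≤ f j := by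
  refine le_of_two_le_of_add_eq_mul h0 h1 hrec fun j hj1 hjb => ?_
  obtain ⟨i, rfl⟩ : ∃ i, j = i + 1 := ⟨j - 1, by omega⟩
  have hfi : 0 ≤ f i := by
    rcases Nat.eq_zero_or_pos i with rfl | hi
    · exact h0.ge
    · exact (hpos i hi (by omega)).le
  have hmid := hpos (i + 1) (by omega) (by omega)
  have hnext := hpos (i + 2) (by omega) (by omega)
  have hr := hrec i
  have : 0 < d (i + 1) := by
    by_contra! hle
    nlinarith
  have := hd (i + 1)
  omega

/-- `neighborDet w i = -τ i`, minus the self-intersection number of the divisor of the ray `w i`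
(see `add_eq_neighborDet_smul`). -/
def neighborDet {n : ℕ} (w : ZMod n → ℤ × ℤ) (i : ZMod n) : ℤ :=
  det2 (w (i - 1)) (w (i + 1))

section Unimodular

variable {n : ℕ} {w : ZMod n → ℤ × ℤ}

lemma add_eq_neighborDet_smul (hdet : ∀ i, det2 (w i) (w (i + 1)) = 1) (i : ZMod n) :
    w (i - 1) + w (i + 1) = neighborDet w i • w i := by
  have hbasis : det2 (w (i - 1)) (w i) = 1 := by simpa using hdet (i - 1)
  have h := eq_smul_add_smul_of_det2_eq_one hbasis (w (i + 1))
  rw [det2_swap, hdet i] at h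
  rw [h, neighborDet]
  abel

lemma neighborDet_eq_of_add_eq_smul (hdet : ∀ i, det2 (w i) (w (i + 1)) = 1) {i : ZMod n}
    {c : ℤ} (h : w (i - 1) + w (i + 1) = c • w i) : neighborDet w i = c := by
  have h' := congrArg (det2 (w (i - 1))) h
  rwa [det2_add_right, det2_self, zero_add, det2_smul_right,
    show det2 (w (i - 1)) (w i) = 1 by simpa using hdet (i - 1), mul_one] at h'

lemma det2_add_det2 (hdet : ∀ i, det2 (w i) (w (i + 1)) = 1) (z : ℤ × ℤ) (i : ZMod n) :
    det2 z (w (i - 1)) + det2 z (w (i + 1)) = neighborDet w i * det2 z (w i) := by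
  rw [← det2_add_right, add_eq_neighborDet_smul hdet, det2_smul_right]

lemma det2_add_det2_natCast (hdet : ∀ i, det2 (w i) (w (i + 1)) = 1) (z : ℤ × ℤ) (k : ZMod n)
    (j : ℕ) : det2 z (w (k + j)) + det2 z (w (k + (j + 2 : ℕ))) =
      neighborDet w (k + (j + 1 : ℕ)) * det2 z (w (k + (j + 1 : ℕ))) := by
  have h := det2_add_det2 hdet z (k + (j + 1 : ℕ))
  rwa [show k + ((j + 1 : ℕ) : ZMod n) - 1 = k + j by push_cast; ring,
    show k + ((j + 1 : ℕ) : ZMod n) + 1 = k + (j + 2 : ℕ) by push_cast; ring] at h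

lemma det2_sub_add_det2_sub (hdet : ∀ i, det2 (w i) (w (i + 1)) = 1) (z : ℤ × ℤ) (k : ZMod n)
    (j : ℕ) : det2 z (w (k - j)) + det2 z (w (k - (j + 2 : ℕ))) =
      neighborDet w (k - (j + 1 : ℕ)) * det2 z (w (k - (j + 1 : ℕ))) := by
  have h := det2_add_det2 hdet z (k - (j + 1 : ℕ))
  rwa [show k - ((j + 1 : ℕ) : ZMod n) - 1 = k - (j + 2 : ℕ) by push_cast; ring,
    show k - ((j + 1 : ℕ) : ZMod n) + 1 = k - j by push_cast; ring, add_comm] at h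

lemma det2_sub_two_add_one (hdet : ∀ i, det2 (w i) (w (i + 1)) = 1) (i : ZMod n) :
    det2 (w (i - 2)) (w (i + 1)) = neighborDet w (i - 1) * neighborDet w i - 1 := by
  have h := det2_mul_det2 (w (i - 1)) (w i) (w (i - 2)) (w (i + 1))
  have h1 : det2 (w (i - 2)) (w (i - 1)) = 1 := by
    simpa [show i - 2 + 1 = i - 1 by ring] using hdet (i - 2)
  have h2 : det2 (w (i - 1)) (w i) = 1 := by simpa using hdet (i - 1)
  have h3 : det2 (w (i - 2)) (w i) = neighborDet w (i - 1) := by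
    simp only [neighborDet, show i - 1 - 1 = i - 2 by ring, sub_add_cancel]
  have h4 : det2 (w (i - 1)) (w (i + 1)) = neighborDet w i := rfl
  rw [h2, one_mul, det2_swap (w (i - 2)), h1, hdet i, det2_swap (w (i - 2)), h3, h4] at h
  linarith

lemma exists_neighborDet_nonpos [NeZero n] (hdet : ∀ i, det2 (w i) (w (i + 1)) = 1)
    (hd : ∀ i, neighborDet w i ≠ 1) : ∃ i, neighborDet w i ≤ 0 := by
  by_contra! hpos
  -- then `det2 (w 0) (w j) ≥ j` all the way round, yet it vanishes at `j = n`
  have hgrow := le_of_two_le_of_add_eq_mul (f := fun j : ℕ => det2 (w 0) (w (0 + j)))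
    (d := fun j : ℕ => neighborDet w (0 + j))
    (by simp) (by simpa using hdet 0) (det2_add_det2_natCast hdet (w 0) 0) (b := n)
    (fun j _ _ => by have := hpos (0 + j); have := hd (0 + j); omega) n le_rfl
  simp only [ZMod.natCast_self, add_zero, det2_self] at hgrow
  have := NeZero.pos n
  omega

end Unimodular

lemma natCast_ne_zero_of_lt {n m : ℕ} (h0 : 0 < m) (hm : m < n) : (m : ZMod n) ≠ 0 := by
  rw [Ne, ZMod.natCast_eq_zero_iff]
  exact Nat.not_dvd_of_pos_of_lt h0 hm

namespace IsSmoothFan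

variable {n : ℕ} {w : ZMod n → ℤ × ℤ}

/-- Once the rays have turned by at least `π` from `w b`, they cannot cross its ray again before
coming back to it: `w b` would lie in two half-open cones. -/
lemma det2_nonpos_of_le (hw : IsSmoothFan n w) (b : ZMod n) {a : ℕ} (ha : 1 ≤ a)
    (h : det2 (w b) (w (b + a)) ≤ 0) {m : ℕ} (ham : a ≤ m) (hmn : m ≤ n) :
    det2 (w b) (w (b + m)) ≤ 0 := by
  induction m, ham using Nat.le_induction with
  | base => exact h
  | succ m ham ih =>
    by_contra! hpos
    have hmem : w b ∈ halfOpenCone (w (b + m)) (w (b + m + 1)) := by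
      refine ⟨?_, ?_⟩
      · rw [det2_swap]; linarith [ih (by omega)]
      · rwa [add_assoc, ← Nat.cast_succ]
    have hself : w b ∈ halfOpenCone (w b) (w (b + 1)) := by
      refine ⟨?_, ?_⟩ <;> simp [hw.det2_succ]
    have hbm := hw.eq_of_mem hmem hself
    exact natCast_ne_zero_of_lt (n := n) (m := m) (by omega) (by omega) (by simpa using hbm)

lemma det2_nonpos_of_neighborDet_nonpos (hw : IsSmoothFan n w) {b : ZMod n}
    (hb : neighborDet w (b + 1) ≤ 0) {m : ℕ} (hm : 2 ≤ m) (hmn : m ≤ n) :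
    det2 (w b) (w (b + m)) ≤ 0 := by
  refine hw.det2_nonpos_of_le b one_le_two ?_ hm hmn
  simpa [neighborDet, add_assoc, one_add_one_eq_two] using hb

/-- The rays `w (b + 3), …, w (b + n - 1)` lie strictly on the negative side of `w b`, and
going backwards from `w (b + n) = w b` they form a convex chain. -/
lemma det2_le_of_neighborDet_nonpos (hw : IsSmoothFan n w) (hd : ∀ i, neighborDet w i ≠ 1)
    {b : ZMod n} (hb : neighborDet w (b + 1) ≤ 0) {m : ℕ} (hm : 3 ≤ m) (hmn : m < n) :
    det2 (w b) (w (b + m)) ≤ m - n := by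
  have hneg : ∀ j, 3 ≤ j → j < n → det2 (w b) (w (b + j)) < 0 := by
    intro j hj hjn
    obtain ⟨i, rfl⟩ : ∃ i, j = i + 2 := ⟨j - 2, by omega⟩
    refine (hw.det2_nonpos_of_neighborDet_nonpos hb (by omega) hjn.le).lt_of_ne fun hzero => ?_
    have hrec := det2_add_det2_natCast hw.det2_succ (w b) b (i + 1)
    have hprev := hw.det2_nonpos_of_neighborDet_nonpos hb (m := i + 1) (by omega) (by omega)
    have hnext := hw.det2_nonpos_of_neighborDet_nonpos hb (m := i + 1 + 2) (by omega) (by omega)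
    rw [hzero, mul_zero] at hrec
    -- two consecutive rays on the line of `w b` would have determinant `0`, not `1`
    have hpl := det2_mul_det2 (w b) (w (b + 1)) (w (b + (i + 1 : ℕ))) (w (b + (i + 1 : ℕ) + 1))
    rw [hw.det2_succ, hw.det2_succ,
      show b + ((i + 1 : ℕ) : ZMod n) + 1 = b + (i + 2 : ℕ) by push_cast; ring, hzero,
      show det2 (w b) (w (b + (i + 1 : ℕ))) = 0 by linarith] at hpl
    simp at hpl
  have hsub : ∀ j ≤ n, b - (j : ℕ) = b + (n - j : ℕ) := fun j hj => by
    rw [Nat.cast_sub hj, ZMod.natCast_self]; ring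
  have hgrow := le_of_pos_of_add_eq_mul (f := fun j : ℕ => -det2 (w b) (w (b - j)))
    (d := fun j : ℕ => neighborDet w (b - j)) (by simp)
    (by simpa [det2_swap (w b)] using hw.det2_succ (b - 1))
    (fun j => by have := det2_sub_add_det2_sub hw.det2_succ (w b) b j; linarith) (fun j => hd _)
    (b := n - 3) (fun j hj1 hj => by
      have := hneg (n - j) (by omega) (by omega)
      simp only [hsub j (by omega)]
      linarith)
    (n - m) (by omega)
  simp only [hsub (n - m) (by omega), Nat.sub_sub_self hmn.le] at hgrow
  push_cast [hmn.le] at hgrow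
  linarith

lemma le_four_of_neighborDet_nonpos_of_nonpos (hw : IsSmoothFan n w)
    (hd : ∀ i, neighborDet w i ≠ 1) {k : ZMod n} (hk' : neighborDet w (k - 1) ≤ 0)
    (hk : neighborDet w k ≤ 0) : n ≤ 4 := by
  by_contra! hn
  have h := hw.det2_le_of_neighborDet_nonpos hd (b := k - 2)
    (by rwa [show k - 2 + 1 = k - 1 by ring]) (m := 3) le_rfl (by omega)
  rw [show k - 2 + ((3 : ℕ) : ZMod n) = k + 1 by push_cast; ring,
    det2_sub_two_add_one hw.det2_succ] at h
  push_cast at h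
  nlinarith [mul_nonneg_of_nonpos_of_nonpos hk' hk]

/-- Let `w (k + p)` be the first ray after `w (k + 1)` at angle `≥ π` from `w k`. In the basis
`w (k - 1), w k`, convexity of the chain `w (k + 1), …, w (k + p - 1)` and the bound of
`det2_le_of_neighborDet_nonpos` seen from `w (k - 1)` give
`det2 (w (k + p - 1)) (w (k + p)) ≥ n - 3`, whereas it is `1`. -/
lemma le_four_of_neighborDet_pos_of_nonpos (hw : IsSmoothFan n w)
    (hd : ∀ i, neighborDet w i ≠ 1) {k : ZMod n} (hk' : 0 < neighborDet w (k - 1))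
    (hk : neighborDet w k ≤ 0) : n ≤ 4 := by
  classical
  by_contra! hn
  set t : ℕ → ℤ := fun j => det2 (w k) (w (k + j)) with ht
  have htn : t (n - 2) ≤ 0 := by
    have : k + ((n - 2 : ℕ) : ZMod n) = k - 1 - 1 := by
      rw [Nat.cast_sub (by omega), ZMod.natCast_self]; ring
    simp only [ht, this, det2_swap (w (k - 1 - 1)) (w k)]
    unfold neighborDet at hk'
    simp only [sub_add_cancel] at hk'
    linarith
  have hturn : ∃ j, 2 ≤ j ∧ t j ≤ 0 := ⟨n - 2, by omega, htn⟩
  obtain ⟨q, hq⟩ : ∃ q, Nat.find hturn = q + 2 := ⟨Nat.find hturn - 2, by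
    have := (Nat.find_spec hturn).1; omega⟩
  have htq : t (q + 2) ≤ 0 := hq ▸ (Nat.find_spec hturn).2
  have hqn : q + 2 ≤ n - 2 := hq ▸ Nat.find_min' hturn ⟨by omega, htn⟩
  have ht1 : t 1 = 1 := by simpa [ht] using hw.det2_succ k
  have hpos : ∀ j, 1 ≤ j → j ≤ q + 1 → 0 < t j := by
    intro j hj1 hj
    rcases hj1.eq_or_lt with rfl | hj2
    · rw [ht1]; exact one_pos
    · by_contra! hle
      exact Nat.find_min hturn (show j < Nat.find hturn by omega) ⟨hj2, hle⟩
  have hgrow := le_of_pos_of_add_eq_mul (d := fun j => neighborDet w (k + j)) (by simp [ht]) ht1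
    (det2_add_det2_natCast hw.det2_succ (w k) k) (fun j => hd _) hpos (q + 1) le_rfl
  have hk1 : neighborDet w (k - 1 + 1) ≤ 0 := by rwa [sub_add_cancel]
  have hs2 := hw.det2_nonpos_of_neighborDet_nonpos hk1 (m := q + 2) (by omega) (by omega)
  have hs3 := hw.det2_le_of_neighborDet_nonpos hd hk1 (m := q + 3) (by omega) (by omega)
  rw [show k - 1 + ((q + 2 : ℕ) : ZMod n) = k + (q + 1 : ℕ) by push_cast; ring] at hs2
  rw [show k - 1 + ((q + 3 : ℕ) : ZMod n) = k + (q + 1 : ℕ) + 1 by push_cast; ring] at hs3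
  simp only [ht, show k + ((q + 2 : ℕ) : ZMod n) = k + (q + 1 : ℕ) + 1 by push_cast; ring]
    at htq hgrow
  have hpl := det2_mul_det2 (w (k - 1)) (w k) (w (k + (q + 1 : ℕ))) (w (k + (q + 1 : ℕ) + 1))
  rw [show det2 (w (k - 1)) (w k) = 1 by simpa using hw.det2_succ (k - 1), hw.det2_succ,
    one_mul] at hpl
  push_cast at hs2 htq hs3 hgrow hpl
  have hqn' : (q : ℤ) + 4 ≤ n := by omega
  nlinarith [mul_nonneg_of_nonpos_of_nonpos hs2 htq, mul_nonneg (q.cast_nonneg : (0 : ℤ) ≤ q)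
    (by linarith : (0 : ℤ) ≤ n - q - 4)]

theorem exists_neighborDet_eq_one [NeZero n] (hw : IsSmoothFan n w) (hn : 5 ≤ n) :
    ∃ i, neighborDet w i = 1 := by
  by_contra! hd
  obtain ⟨k, hk⟩ := exists_neighborDet_nonpos hw.det2_succ hd
  rcases le_or_gt (neighborDet w (k - 1)) 0 with hk' | hk'
  · have := hw.le_four_of_neighborDet_nonpos_of_nonpos hd hk' hk
    omega
  · have := hw.le_four_of_neighborDet_pos_of_nonpos hd hk' hk
    omega

lemma comp_add (hw : IsSmoothFan n w) (c : ZMod n) : IsSmoothFan n (fun i => w (i + c)) where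
  det2_succ i := by
    simpa only [add_right_comm i 1 c] using hw.det2_succ (i + c)
  exists_mem z hz := by
    obtain ⟨i, hi⟩ := hw.exists_mem z hz
    exact ⟨i - c, by simpa only [sub_add_cancel, sub_add_eq_add_sub] using hi⟩
  eq_of_mem {z i j} hi hj := by
    simp only [add_right_comm _ 1 c] at hi hj
    exact add_right_cancel (hw.eq_of_mem hi hj)

end IsSmoothFan

lemma sum_neighborDet_comp_add {n : ℕ} [NeZero n] (w : ZMod n → ℤ × ℤ) (c : ZMod n) :
    ∑ i, neighborDet (fun j => w (j + c)) i = ∑ i, neighborDet w i := by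
  refine Fintype.sum_equiv (Equiv.addRight c) _ _ fun i => ?_
  simp only [neighborDet, Equiv.coe_addRight, sub_add_eq_add_sub, add_right_comm i 1 c]

section DropLast

/-! In this section `(i.val : ZMod (m + 1))`, for `i : ZMod m`, runs over all indices but `-1`. -/

variable {m : ℕ}

lemma natCast_val_natCast_val {j : ZMod (m + 1)} (hj : j ≠ -1) :
    (((j.val : ZMod m).val : ℕ) : ZMod (m + 1)) = j := by
  have hlt : j.val < m := by
    have := j.val_lt
    have : j.val ≠ m := fun h => hj (by
      rw [← ZMod.natCast_zmod_val j, h, eq_neg_iff_add_eq_zero, ← Nat.cast_succ,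
        ZMod.natCast_self])
    omega
  rw [ZMod.val_cast_of_lt hlt, ZMod.natCast_zmod_val]

variable [NeZero m]

lemma val_add_one_of_ne_neg_one {i : ZMod m} (hi : i ≠ -1) :
    (i + 1).val = i.val + 1 := by
  have hlt : i.val + 1 < m := by
    by_contra! hle
    have hval : i.val + 1 = m := by have := i.val_lt; omega
    apply hi
    rw [eq_neg_iff_add_eq_zero]
    calc i + 1 = ((i.val + 1 : ℕ) : ZMod m) := by rw [Nat.cast_succ, ZMod.natCast_zmod_val]
      _ = 0 := by rw [hval, ZMod.natCast_self]
  rw [← ZMod.val_cast_of_lt hlt]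
  push_cast [ZMod.natCast_zmod_val]
  rfl

lemma natCast_val_injective {i j : ZMod m}
    (h : (i.val : ZMod (m + 1)) = j.val) : i = j := by
  apply ZMod.val_injective
  have h' := congrArg ZMod.val h
  rwa [ZMod.val_cast_of_lt (Nat.lt_succ_of_lt i.val_lt),
    ZMod.val_cast_of_lt (Nat.lt_succ_of_lt j.val_lt)] at h'

lemma natCast_val_ne_neg_one (i : ZMod m) : (i.val : ZMod (m + 1)) ≠ -1 := by
  intro h
  have := congrArg ZMod.val h
  rw [ZMod.val_cast_of_lt (Nat.lt_succ_of_lt i.val_lt), ZMod.val_neg_one] at this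
  exact i.val_lt.ne this

lemma natCast_val_add_one {i : ZMod m} (hi : i ≠ -1) :
    ((i + 1).val : ZMod (m + 1)) = i.val + 1 := by
  rw [val_add_one_of_ne_neg_one hi, Nat.cast_succ]

lemma natCast_val_neg_one : ((-1 : ZMod m).val : ZMod (m + 1)) = -2 := by
  obtain ⟨k, rfl⟩ : ∃ k, m = k + 1 := ⟨m - 1, by have := NeZero.pos m; omega⟩
  rw [ZMod.val_neg_one, eq_neg_iff_add_eq_zero]
  calc ((k : ℕ) : ZMod (k + 1 + 1)) + 2 = ((k + 1 + 1 : ℕ) : ZMod (k + 1 + 1)) := by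
        push_cast; ring
    _ = 0 := ZMod.natCast_self _

lemma sum_eq_sum_natCast_val_add {M : Type*} [AddCommMonoid M] (F : ZMod (m + 1) → M) :
    ∑ j, F j = ∑ i : ZMod m, F i.val + F (-1) := by
  classical
  rw [← Finset.sum_erase_add _ _ (Finset.mem_univ (-1))]
  congr 1
  symm
  refine Finset.sum_nbij' (fun i => (i.val : ZMod (m + 1))) (fun j => (j.val : ZMod m)) ?_ ?_ ?_
    ?_ (fun _ _ => rfl)
  · intro i _
    exact Finset.mem_erase.mpr ⟨natCast_val_ne_neg_one i, Finset.mem_univ _⟩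
  · intro _ _
    exact Finset.mem_univ _
  · intro i _
    rw [ZMod.val_cast_of_lt (Nat.lt_succ_of_lt i.val_lt), ZMod.natCast_zmod_val]
  · intro j hj
    exact natCast_val_natCast_val (Finset.ne_of_mem_erase hj)

variable {v : ZMod (m + 1) → ℤ × ℤ}

/-- Blowing down the ray `v (-1) = v (-2) + v 0`: the two cones next to it merge into one. -/
lemma IsSmoothFan.dropLast (hv : IsSmoothFan (m + 1) v) (hrel : v (-1) = v (-2) + v 0) :
    IsSmoothFan m (fun i : ZMod m => v i.val) := by
  have hmerged : det2 (v (-2)) (v 0) = 1 := by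
    simpa [show (-2 : ZMod (m + 1)) + 1 = -1 by ring, hrel] using hv.det2_succ (-2)
  have hcone : ∀ (i : ZMod m) z, z ∈ halfOpenCone (v i.val) (v (i + 1).val) ↔
      z ∈ halfOpenCone (v i.val) (v (i.val + 1)) ∨
        (i = -1 ∧ z ∈ halfOpenCone (v (-1)) (v (-1 + 1))) := by
    intro i z
    by_cases hi : i = -1
    · subst hi
      rw [natCast_val_neg_one, neg_add_cancel (1 : ZMod m), ZMod.val_zero, Nat.cast_zero,
        show (-2 : ZMod (m + 1)) + 1 = -1 by ring, neg_add_cancel, hrel,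
        halfOpenCone_eq_union_add]
      simp
    · simp [hi, natCast_val_add_one hi]
  refine ⟨fun i => ?_, fun z hz => ?_, fun {z i j} hi hj => ?_⟩
  · by_cases hi : i = -1
    · subst hi
      rwa [neg_add_cancel, ZMod.val_zero, Nat.cast_zero, natCast_val_neg_one]
    · rw [natCast_val_add_one hi]
      exact hv.det2_succ _
  · obtain ⟨j, hj⟩ := hv.exists_mem z hz
    by_cases hj' : j = -1
    · exact ⟨-1, (hcone _ z).mpr (Or.inr ⟨rfl, hj' ▸ hj⟩)⟩
    · refine ⟨(j.val : ZMod m), (hcone _ z).mpr (Or.inl ?_)⟩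
      rwa [natCast_val_natCast_val hj']
  · rcases (hcone i z).mp hi with hi' | ⟨rfl, hi'⟩ <;>
      rcases (hcone j z).mp hj with hj' | ⟨rfl, hj'⟩
    · exact natCast_val_injective (hv.eq_of_mem hi' hj')
    · exact absurd (hv.eq_of_mem hi' hj') (natCast_val_ne_neg_one i)
    · exact absurd (hv.eq_of_mem hj' hi') (natCast_val_ne_neg_one j)
    · rfl

lemma sum_neighborDet_dropLast (hm : 1 < m) (hdet : ∀ j, det2 (v j) (v (j + 1)) = 1)
    (hrel : v (-1) = v (-2) + v 0) :
    ∑ j, neighborDet v j = ∑ i : ZMod m, neighborDet (fun i : ZMod m => v i.val) i + 3 := by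
  have : Fact (1 < m) := ⟨hm⟩
  have hzero : (0 : ZMod m) ≠ -1 := (neg_ne_zero.mpr one_ne_zero).symm
  have hpred : ∀ i : ZMod m, i ≠ 0 → ((i - 1).val : ZMod (m + 1)) = i.val - 1 := by
    intro i hi
    have h := natCast_val_add_one (i := i - 1) fun h => hi (by linear_combination h)
    rw [sub_add_cancel] at h
    rw [h, add_sub_cancel_right]
  have hlast : det2 (v (-2)) (v 0) = 1 := by
    simpa [show (-2 : ZMod (m + 1)) + 1 = -1 by ring, hrel] using hdet (-2)
  have hterm : ∀ i : ZMod m, neighborDet v i.val =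
      neighborDet (fun i : ZMod m => v i.val) i + (if i = 0 then 1 else 0) +
        (if i = -1 then 1 else 0) := by
    intro i
    simp only [neighborDet]
    by_cases hi0 : i = 0
    · subst hi0
      have h1 := natCast_val_add_one hzero
      rw [zero_add, ZMod.val_zero, Nat.cast_zero, zero_add] at h1
      rw [if_pos rfl, if_neg hzero, zero_sub, zero_add, ZMod.val_zero, Nat.cast_zero, zero_sub,
        zero_add, natCast_val_neg_one, h1, hrel, det2_add_left]
      simpa using hdet 0
    by_cases hi1 : i = -1
    · subst hi1
      rw [if_neg hi0, if_pos rfl, hpred _ hi0, neg_add_cancel (1 : ZMod m), ZMod.val_zero,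
        Nat.cast_zero, natCast_val_neg_one, show (-2 : ZMod (m + 1)) + 1 = -1 by ring, hrel,
        det2_add_right, show (-2 : ZMod (m + 1)) - 1 = -3 by ring]
      have h3 := hdet (-3)
      rw [show (-3 : ZMod (m + 1)) + 1 = -2 by ring] at h3
      rw [h3]
      ring
    · rw [if_neg hi0, if_neg hi1, hpred _ hi0, natCast_val_add_one hi1]
      ring
  rw [sum_eq_sum_natCast_val_add, Finset.sum_congr rfl fun i _ => hterm i,
    Finset.sum_add_distrib, Finset.sum_add_distrib, Finset.sum_ite_eq', Finset.sum_ite_eq',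
    if_pos (Finset.mem_univ _), if_pos (Finset.mem_univ _)]
  simp only [neighborDet, show (-1 : ZMod (m + 1)) - 1 = -2 by ring, neg_add_cancel, hlast]
  ring

end DropLast

theorem IsSmoothFan.exists_blowDown {m : ℕ} [NeZero m] {w : ZMod (m + 1) → ℤ × ℤ}
    (hw : IsSmoothFan (m + 1) w) (hm : 4 ≤ m) :
    ∃ w' : ZMod m → ℤ × ℤ,
      IsSmoothFan m w' ∧ ∑ i, neighborDet w i = ∑ i, neighborDet w' i + 3 := by
  obtain ⟨i₀, hi₀⟩ := hw.exists_neighborDet_eq_one (by omega)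
  have hrel : w (-1 + (i₀ + 1)) = w (-2 + (i₀ + 1)) + w (0 + (i₀ + 1)) := by
    have h := add_eq_neighborDet_smul hw.det2_succ i₀
    rw [hi₀, one_smul] at h
    rw [show (-1 : ZMod (m + 1)) + (i₀ + 1) = i₀ by ring,
      show (-2 : ZMod (m + 1)) + (i₀ + 1) = i₀ - 1 by ring, zero_add, h]
  have hv := hw.comp_add (i₀ + 1)
  refine ⟨_, hv.dropLast hrel, ?_⟩
  rw [← sum_neighborDet_comp_add w (i₀ + 1),
    sum_neighborDet_dropLast (by omega) hv.det2_succ hrel]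

lemma three_le_of_det2_succ {n : ℕ} [NeZero n] {w : ZMod n → ℤ × ℤ}
    (hdet : ∀ i, det2 (w i) (w (i + 1)) = 1) : 3 ≤ n := by
  by_contra! hn
  have := NeZero.pos n
  interval_cases n
  · simpa [show (0 + 1 : ZMod 1) = 0 from rfl] using hdet 0
  · have h0 := hdet 0
    have h1 := hdet 1
    rw [show (1 + 1 : ZMod 2) = 0 from rfl, det2_swap] at h1
    rw [zero_add] at h0
    omega

lemma sum_neighborDet_three {w : ZMod 3 → ℤ × ℤ} (hdet : ∀ i, det2 (w i) (w (i + 1)) = 1) :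
    ∑ i, neighborDet w i = -3 := by
  have hidx : ∀ i : ZMod 3, i - 1 = i + 1 + 1 := by decide
  have h : ∀ i, neighborDet w i = -1 := fun i => by
    rw [neighborDet, hidx, det2_swap, hdet]
  simp [h]

lemma sum_neighborDet_four (w : ZMod 4 → ℤ × ℤ) : ∑ i, neighborDet w i = 0 := by
  have hidx : ∀ i : ZMod 4, i + 2 + 1 = i - 1 := by decide
  have h : ∀ i, neighborDet w (i + 2) = -neighborDet w i := fun i => by
    rw [neighborDet, neighborDet, show i + 2 - 1 = i + 1 by ring, hidx, det2_swap]
  have hs := Fintype.sum_equiv (Equiv.addRight 2) (fun i => neighborDet w (i + 2))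
    (neighborDet w) fun _ => rfl
  simp only [h, Finset.sum_neg_distrib] at hs
  linarith

theorem IsSmoothFan.sum_neighborDet {n : ℕ} [NeZero n] {w : ZMod n → ℤ × ℤ}
    (hw : IsSmoothFan n w) : ∑ i, neighborDet w i = 3 * n - 12 := by
  -- the `NeZero n` instance has to be generalized along with `n`
  rename_i hn0
  revert hn0
  induction n using Nat.strong_induction_on with
  | _ n ih =>
  intro hn0
  rcases (show n = 3 ∨ n = 4 ∨ 5 ≤ n by have := three_le_of_det2_succ hw.det2_succ; omega)
    with rfl | rfl | hn
  · rw [sum_neighborDet_three hw.det2_succ]; norm_num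
  · rw [sum_neighborDet_four]; norm_num
  · obtain ⟨m, rfl⟩ : ∃ m, n = m + 1 := ⟨n - 1, by omega⟩
    have : NeZero m := ⟨by omega⟩
    obtain ⟨w', hw', hsum⟩ := hw.exists_blowDown (by omega)
    rw [hsum, ih m (by omega) hw']
    push_cast
    ring

end ToricNoether

/-- Noether's formula for smooth complete toric surfaces:
for a complete unimodular fan in `ℝ²` with rays `w 1, …, w n` in cyclic order
(consecutive pairs spanning the maximal cones, `det (w i) (w (i+1)) = 1`, the closed
maximal cones covering the plane and their interiors pairwise disjoint), if
`-τ i • w i = w (i-1) + w (i+1)` for every `i`, then `12 = 3n + ∑ τ i`. -/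
theorem toric_surface_noether (n : ℕ) [NeZero n] (w : ZMod n → ℤ × ℤ) (τ : ZMod n → ℤ)
    (hdet : ∀ i, det2 (w i) (w (i + 1)) = 1)
    (hcov : (⋃ i, maxCone w i) = Set.univ)
    (hdisj : ∀ i j, i ≠ j → maxConeInt w i ∩ maxConeInt w j = ∅)
    (hτ : ∀ i, w (i - 1) + w (i + 1) = (-τ i) • w i) :
    (12 : ℤ) = 3 * (n : ℤ) + ∑ i : ZMod n, τ i := by
  have hsum := (ToricNoether.isSmoothFan_of_cover hdet hcov hdisj).sum_neighborDet
  rw [Finset.sum_congr rfl fun i _ => ToricNoether.neighborDet_eq_of_add_eq_smul hdet (hτ i),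
    Finset.sum_neg_distrib] at hsum
  linarith
end

section
/- Let M be a loopless matroid and σ ∈ B(M) a k-dimensional cone corresponding to a chain of flats F = {∅ ⊊ F_1 ⊊ ⋯ ⊊ F_k ⊊ E}. Then the star fan star_σ(B(M)) equals (after translation to the origin) the Bergman fan of the matroid ⊕_{i=0}^{k} M|F_{i+1}/F_i, in the sense that the lattice of flats of ⊕ M|F_{i+1}/F_i corresponds to the chains of flats of M refining F. -/
/-!
The blockwise independence condition says that `N` is the direct sum (`Matroid.disjointSigma`)
of the minors `(M ／ F i) ↾ (F (i + 1) \ F i)`. Closure in a direct sum is computed summand by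
summand, so the flats of `N` are the sets whose trace on every summand is a flat. A flat `S` of
`(M ／ A) ↾ (A' \ A)` is `G \ A` for the flat `G = cl(S ∪ A)` of `M`, which lies between `A` and
`A'` because `A'` is a flat.
-/

open scoped BigOperators
open Polynomial

/-- The rank of a set `S` in a matroid `M`: the largest cardinality of an independent
subset of `S`. -/
noncomputable def mrank {α : Type*} (M : Matroid α) (S : Set α) : ℕ :=
  sSup {n | ∃ I, I ⊆ S ∧ M.Indep I ∧ I.ncard = n}

/-- The characteristic polynomial of a matroid:
`χ_M(λ) = Σ_{S ⊆ E} (-1)^{|S|} λ^{r(E) - r(S)}`. -/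
noncomputable def charPoly {α : Type*} (M : Matroid α) [Fintype α] : Polynomial ℤ :=
  ∑ S ∈ ((Set.toFinite M.E).toFinset).powerset,
    C ((-1 : ℤ) ^ S.card) * X ^ (mrank M M.E - mrank M ↑S)

/-- The rank function of the minor `(M|F')/F`: for `S ⊆ F' \ F` it is
`r(S ∪ F) - r(F)`. -/
noncomputable def minorRank {α : Type*} (M : Matroid α) (F F' S : Set α) : ℕ :=
  mrank M ((S ∩ (F' \ F)) ∪ F) - mrank M F

/-- Independence in the minor `(M|F')/F`. -/
noncomputable def MinorIndep {α : Type*} (M : Matroid α) (F F' I : Set α) : Prop :=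
  I ⊆ F' \ F ∧ mrank M (I ∪ F) = I.ncard + mrank M F

/-- The beta invariant of the minor `(M|F')/F`:
`β = (-1)^rank Σ_{S ⊆ F'\F} (-1)^{|S|} r(S)`. -/
noncomputable def minorBeta {α : Type*} (M : Matroid α) [Fintype α] (F F' : Set α) : ℤ :=
  (-1 : ℤ) ^ (minorRank M F F' Set.univ) *
    ∑ S ∈ ((Set.toFinite (F' \ F)).toFinset).powerset,
      (-1 : ℤ) ^ S.card * (minorRank M F F' ↑S : ℤ)

open Set Function

namespace Matroid

variable {α ι : Type*} {M : Matroid α}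

lemma IsFlat.closure_subset_of_subset {F X : Set α} (hF : M.IsFlat F) (hXF : X ⊆ F) :
    M.closure X ⊆ F :=
  hF.closure ▸ M.closure_subset_closure hXF

lemma cast_mrank_eq_eRk {X : Set α} (hX : M.IsRkFinite X) : (mrank M X : ℕ∞) = M.eRk X := by
  obtain ⟨I, hI, hIfin⟩ := hX.exists_finite_isBasis'
  have hmax : IsGreatest {n | ∃ J, J ⊆ X ∧ M.Indep J ∧ J.ncard = n} I.ncard := by
    refine ⟨⟨I, hI.subset, hI.indep, rfl⟩, ?_⟩
    rintro _ ⟨J, hJX, hJ, rfl⟩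
    have hJfin := hX.finite_of_indep_subset hJ hJX
    rw [← Nat.cast_le (α := ℕ∞), hJfin.cast_ncard_eq, hIfin.cast_ncard_eq, hI.encard_eq_eRk]
    exact hJ.encard_le_eRk_of_subset hJX
  rw [mrank, hmax.csSup_eq, hIfin.cast_ncard_eq, hI.encard_eq_eRk]

lemma contract_indep_iff_mrank [Finite α] {I C : Set α} (hIC : Disjoint I C) :
    (M ／ C).Indep I ↔ mrank M (I ∪ C) = I.ncard + mrank M C := by
  obtain ⟨B, hB⟩ := M.exists_isBasis' C
  rw [hB.contract_indep_iff, and_iff_left hIC.symm, indep_iff_eRk_eq_encard,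
    ← Nat.cast_inj (R := ℕ∞), Nat.cast_add, cast_mrank_eq_eRk (M.isRkFinite_set _),
    cast_mrank_eq_eRk (M.isRkFinite_set _), (toFinite I).cast_ncard_eq,
    encard_union_eq (hIC.mono_right hB.subset), hB.encard_eq_eRk, union_comm I B,
    hB.eRk_eq_eRk_union, union_comm C I]

lemma minorIndep_iff_indep_contract_restrict [Finite α] {A A' I : Set α} :
    MinorIndep M A A' I ↔ ((M ／ A) ↾ (A' \ A)).Indep I := by
  rw [restrict_indep_iff, and_comm, MinorIndep]
  exact and_congr_right fun hI ↦ (contract_indep_iff_mrank (subset_sdiff.1 hI).2).symm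

section disjointSigma

variable {Ms : ι → Matroid α} {h : Pairwise (Disjoint on fun i ↦ (Ms i).E)}

lemma disjointSigma_insert_indep_iff {I : Set α} {e : α} {i : ι}
    (hI : (Matroid.disjointSigma Ms h).Indep I) (he : e ∈ (Ms i).E) :
    (Matroid.disjointSigma Ms h).Indep (insert e I) ↔
      (Ms i).Indep (insert e (I ∩ (Ms i).E)) := by
  rw [disjointSigma_indep_iff] at hI ⊢
  refine ⟨fun hins ↦ by simpa [insert_inter_of_mem he] using hins.1 i,
    fun hins ↦ ⟨fun j ↦ ?_, insert_subset (mem_iUnion_of_mem i he) hI.2⟩⟩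
  obtain rfl | hji := eq_or_ne j i
  · rwa [insert_inter_of_mem he]
  · rw [insert_inter_of_notMem ((h hji).notMem_of_mem_right he)]
    exact hI.1 j

lemma mem_disjointSigma_closure_iff {X : Set α} {e : α} {i : ι} (he : e ∈ (Ms i).E) :
    e ∈ (Matroid.disjointSigma Ms h).closure X ↔ e ∈ (Ms i).closure (X ∩ (Ms i).E) := by
  set N := Matroid.disjointSigma Ms h
  have hEi : (Ms i).E ⊆ N.E := by simpa [N] using subset_iUnion (fun j ↦ (Ms j).E) i
  obtain ⟨I, hI⟩ := N.exists_isBasis (X ∩ N.E)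
  have hIi := (disjointSigma_isBasis_iff.1 hI).1 i
  rw [inter_assoc, inter_eq_right.2 hEi] at hIi
  rw [← closure_inter_ground, ← hI.closure_eq_closure, ← hIi.closure_eq_closure]
  by_cases heI : e ∈ I
  · exact iff_of_true (N.mem_closure_of_mem' heI) ((Ms i).mem_closure_of_mem' ⟨heI, he⟩)
  rw [hI.indep.mem_closure_iff_of_notMem heI, hIi.indep.mem_closure_iff_of_notMem (heI ·.1),
    ← not_indep_iff (insert_subset (hEi he) hI.indep.subset_ground),
    ← not_indep_iff (insert_subset he hIi.indep.subset_ground),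
    disjointSigma_insert_indep_iff hI.indep he]

lemma disjointSigma_isFlat_iff {F : Set α} :
    (Matroid.disjointSigma Ms h).IsFlat F ↔
      (∀ i, (Ms i).IsFlat (F ∩ (Ms i).E)) ∧ F ⊆ ⋃ i, (Ms i).E := by
  set N := Matroid.disjointSigma Ms h
  constructor
  · intro hF
    refine ⟨fun i ↦ isFlat_iff_closure_eq.2 (subset_antisymm (fun e he ↦ ?_)
      ((Ms i).subset_closure _ inter_subset_right)), by simpa [N] using hF.subset_ground⟩
    have heE := (Ms i).closure_subset_ground _ he
    exact ⟨hF.closure ▸ (mem_disjointSigma_closure_iff heE).2 he, heE⟩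
  · rintro ⟨hFi, hFE⟩
    refine isFlat_iff_closure_eq.2 (subset_antisymm (fun e he ↦ ?_)
      (N.subset_closure F (by simpa [N] using hFE)))
    obtain ⟨i, heE⟩ := mem_iUnion.1 (by simpa [N] using N.closure_subset_ground F he)
    exact ((hFi i).closure ▸ (mem_disjointSigma_closure_iff heE).1 he).1

end disjointSigma

section interval

variable {A A' S : Set α}

lemma contract_restrict_closure_eq (hA' : M.IsFlat A') (hAA' : A ⊆ A') (hS : S ⊆ A' \ A) :
    ((M ／ A) ↾ (A' \ A)).closure S = M.closure (S ∪ A) \ A := by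
  have hSA : S ∪ A ⊆ A' := union_subset (hS.trans sdiff_subset) hAA'
  rw [restrict_closure_eq _ hS (sdiff_subset_sdiff_left hA'.subset_ground), contract_closure_eq,
    inter_eq_left.2 (sdiff_subset_sdiff_left (hA'.closure_subset_of_subset hSA))]

lemma contract_restrict_isFlat_iff (hA' : M.IsFlat A') (hAA' : A ⊆ A') (hS : S ⊆ A' \ A) :
    ((M ／ A) ↾ (A' \ A)).IsFlat S ↔ ∃ G, M.IsFlat G ∧ A ⊆ G ∧ G ⊆ A' ∧ S = G \ A := by
  rw [isFlat_iff_closure_eq, contract_restrict_closure_eq hA' hAA' hS]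
  refine ⟨fun hcl ↦ ⟨M.closure (S ∪ A), M.isFlat_closure _,
    M.subset_closure_of_subset' subset_union_right (hAA'.trans hA'.subset_ground),
    hA'.closure_subset_of_subset (union_subset (hS.trans sdiff_subset) hAA'), hcl.symm⟩, ?_⟩
  rintro ⟨G, hG, hAG, -, rfl⟩
  rw [sdiff_union_of_subset hAG, hG.closure]

end interval

end Matroid

lemma sdiff_subset_iUnion_succ_sdiff_castSucc {α : Type*} {n : ℕ} (F : Fin (n + 1) → Set α) :
    F (Fin.last n) \ F 0 ⊆ ⋃ i : Fin n, F i.succ \ F i.castSucc := by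
  rintro x ⟨hlast, h0⟩
  by_contra hx
  simp only [mem_iUnion, mem_sdiff, not_exists, not_and, not_not] at hx
  exact h0 (Fin.reverseInduction (motive := fun j ↦ x ∈ F j) hlast hx 0)

lemma Monotone.pairwise_disjoint_on_succ_sdiff_castSucc {α : Type*} {n : ℕ}
    {F : Fin (n + 1) → Set α} (hF : Monotone F) :
    Pairwise (Disjoint on fun i : Fin n ↦ F i.succ \ F i.castSucc) :=
  (pairwise_disjoint_on _).2 fun _ _ hij ↦
    disjoint_sdiff_right.mono_left (sdiff_subset.trans (hF (Fin.succ_le_castSucc_iff.2 hij)))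

open Matroid

theorem star_fan_flats_of_direct_sum_general {α : Type*} [Fintype α] {k : ℕ}
    (M : Matroid α)
    (F : Fin (k + 2) → Set α) (hmono : StrictMono F)
    (h0 : F 0 = ∅) (htop : F (Fin.last (k + 1)) = Set.univ)
    (hflat : ∀ i, M.IsFlat (F i))
    (N : Matroid α) (hNE : N.E = Set.univ)
    (hNI : ∀ I, N.Indep I ↔ I ⊆ Set.univ ∧ ∀ i : Fin (k + 1),
      MinorIndep M (F i.castSucc) (F i.succ) (I ∩ (F i.succ \ F i.castSucc))) :
    ∀ H : Set α, N.IsFlat H ↔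
      ∀ i : Fin (k + 1), ∃ G : Set α, M.IsFlat G ∧ F i.castSucc ⊆ G ∧ G ⊆ F i.succ ∧
        H ∩ (F i.succ \ F i.castSucc) = G \ F i.castSucc := by
  set Ms : Fin (k + 1) → Matroid α := fun i ↦ (M ／ F i.castSucc) ↾ (F i.succ \ F i.castSucc)
  have hdisj : Pairwise (Disjoint on fun i ↦ (Ms i).E) :=
    hmono.monotone.pairwise_disjoint_on_succ_sdiff_castSucc
  have hcover : ⋃ i, (Ms i).E = univ := by
    simpa [Ms, h0, htop] using sdiff_subset_iUnion_succ_sdiff_castSucc F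
  have hN : N = Matroid.disjointSigma Ms hdisj :=
    ext_indep (by simp [hNE, hcover]) fun I _ ↦ by
      rw [hNI, disjointSigma_indep_iff, hcover, and_comm]
      exact and_congr_left' (forall_congr' fun _ ↦ minorIndep_iff_indep_contract_restrict)
  intro H
  rw [hN, disjointSigma_isFlat_iff, hcover]
  simp only [subset_univ, and_true]
  exact forall_congr' fun i ↦ contract_restrict_isFlat_iff (hflat _)
    (hmono.monotone (Fin.castSucc_le_succ i)) inter_subset_right

/-- let `M` be a loopless matroid and
`𝓕 = {∅ = F₀ ⊊ F₁ ⊊ ⋯ ⊊ F_k ⊊ F_{k+1} = E}` a chain of flats corresponding to a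
`k`-dimensional cone `σ` of `B(M)`.  Then the star fan `star_σ(B(M))` is the Bergman fan
of the direct sum `N = ⊕_{i=0}^k M|F_{i+1}/F_i` in the sense that the lattice of flats of
`N` corresponds to the chains of flats of `M` refining `𝓕`: a set `H` is a flat of `N`
iff for every `i` there is a flat `G` of `M` with `F_i ⊆ G ⊆ F_{i+1}` such that
`H ∩ (F_{i+1} \ F_i) = G \ F_i`. -/
theorem star_fan_flats_of_direct_sum {α : Type*} [Fintype α] {k : ℕ}
    (M : Matroid α) (hE : M.E = Set.univ) (hl : MLoopless M)
    (F : Fin (k + 2) → Set α) (hmono : StrictMono F)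
    (h0 : F 0 = ∅) (htop : F (Fin.last (k + 1)) = Set.univ)
    (hflat : ∀ i, M.IsFlat (F i))
    (N : Matroid α) (hNE : N.E = Set.univ)
    (hNI : ∀ I, N.Indep I ↔ I ⊆ Set.univ ∧ ∀ i : Fin (k + 1),
      MinorIndep M (F i.castSucc) (F i.succ) (I ∩ (F i.succ \ F i.castSucc))) :
    ∀ H : Set α, N.IsFlat H ↔
      ∀ i : Fin (k + 1), ∃ G : Set α, M.IsFlat G ∧ F i.castSucc ⊆ G ∧ G ⊆ F i.succ ∧
        H ∩ (F i.succ \ F i.castSucc) = G \ F i.castSucc :=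
  star_fan_flats_of_direct_sum_general M F hmono h0 htop hflat N hNE hNI
end
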